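/- arXiv:2211.11368 — 9 statements merged into one kernel-verified Lean document; each statement's English description precedes it below -/
import Mathlib

section
/- Assume additionally that ℙ(Z·G ≠ 0) > 0. Then φ is differentiable on (τ, ∞) with φ′(λ) = −𝔼[(Z·G/(λ−Z))²] < 0 for every λ > τ; in particular, φ is strictly decreasing on (τ, ∞). -/
/-!
Differentiate under the integral sign. For `x > τ ≥ Z` the integrand `x · Z G² / (x − Z)` has
`x`-derivative `−(Z G / (x − Z))²`, and since `Z / (x − Z) = x / (x − Z) − 1`, both are dominated,
uniformly for `x` near `λ`, by a constant multiple of `G²`, which is integrable because `G` is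
Gaussian. The derivative is negative because its integrand is positive on `{Z G ≠ 0}`, and the
mean value theorem turns this into strict monotonicity.
-/

open MeasureTheory ProbabilityTheory Real Set Filter

theorem abs_div_sub_le {z x δ R : ℝ} (hδ : 0 < δ) (hxz : δ ≤ x - z) (hx : |x| ≤ R) :
    |z / (x - z)| ≤ 1 + R / δ := by
  have hpos : 0 < x - z := hδ.trans_le hxz
  calc |z / (x - z)| = |x / (x - z) - 1| := by
        rw [div_sub_one hpos.ne', sub_sub_cancel]
    _ ≤ |x / (x - z)| + 1 := by simpa using abs_sub (x / (x - z)) 1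
    _ = |x| / (x - z) + 1 := by rw [abs_div, abs_of_pos hpos]
    _ ≤ 1 + R / δ := by
        have : |x| / (x - z) ≤ R / δ := div_le_div₀ ((abs_nonneg x).trans hx) hx hδ hxz
        linarith

theorem sq_mul_div_sub_le {z g x δ R : ℝ} (hδ : 0 < δ) (hxz : δ ≤ x - z) (hx : |x| ≤ R) :
    (z * g / (x - z)) ^ 2 ≤ (1 + R / δ) ^ 2 * g ^ 2 := by
  rw [mul_div_right_comm, mul_pow, ← sq_abs (z / (x - z))]
  gcongr
  exact abs_div_sub_le hδ hxz hx

theorem hasDerivAt_mul_div_sub (z g : ℝ) {x : ℝ} (hx : x ≠ z) :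
    HasDerivAt (fun y => y * (z * g ^ 2 / (y - z))) (-(z * g / (x - z)) ^ 2) x := by
  have hxz : x - z ≠ 0 := sub_ne_zero.2 hx
  have h := ((hasDerivAt_id' x).mul_const (z * g ^ 2)).div ((hasDerivAt_id' x).sub_const z) hxz
  simp only [← mul_div_assoc]
  exact h.congr_deriv (by field_simp; ring)

theorem integrable_sq_of_map_eq_gaussianReal {Ω : Type*} {mΩ : MeasurableSpace Ω} {μ : Measure Ω}
    {G : Ω → ℝ} {m : ℝ} {v : NNReal} (hG : AEMeasurable G μ) (hmap : μ.map G = gaussianReal m v) :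
    Integrable (fun ω => G ω ^ 2) μ :=
  (hmap ▸ memLp_id_gaussianReal 2 : MemLp id 2 (μ.map G)).comp_of_map hG |>.integrable_sq

section

variable {Ω : Type*} {mΩ : MeasurableSpace Ω} {μ : Measure Ω} {G Z : Ω → ℝ} {τ lam : ℝ}

theorem integrable_sq_mul_div_sub (hZ : AEMeasurable Z μ) (hG : AEMeasurable G μ)
    (hG2 : Integrable (fun ω => G ω ^ 2) μ) (hZτ : ∀ᵐ ω ∂μ, Z ω ≤ τ) (hlam : τ < lam) :
    Integrable (fun ω => (Z ω * G ω / (lam - Z ω)) ^ 2) μ := by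
  refine (hG2.const_mul ((1 + |lam| / (lam - τ)) ^ 2)).mono'
    (by fun_prop : AEMeasurable _ μ).aestronglyMeasurable ?_
  filter_upwards [hZτ] with ω hω
  rw [Real.norm_eq_abs, abs_sq]
  exact sq_mul_div_sub_le (sub_pos.2 hlam) (by linarith) le_rfl

theorem hasDerivAt_mul_integral_div_sub (hZ : AEMeasurable Z μ) (hG : AEMeasurable G μ)
    (hG2 : Integrable (fun ω => G ω ^ 2) μ) (hZτ : ∀ᵐ ω ∂μ, Z ω ≤ τ) (hlam : τ < lam) :
    HasDerivAt (fun x => x * ∫ ω, Z ω * G ω ^ 2 / (x - Z ω) ∂μ)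
      (-∫ ω, (Z ω * G ω / (lam - Z ω)) ^ 2 ∂μ) lam := by
  obtain ⟨δ, hδ, hδτ⟩ : ∃ δ, 0 < δ ∧ lam - τ = 2 * δ := ⟨(lam - τ) / 2, by linarith, by ring⟩
  have hgap : ∀ᵐ ω ∂μ, ∀ x ∈ Metric.ball lam δ, δ ≤ x - Z ω ∧ |x| ≤ |lam| + δ := by
    filter_upwards [hZτ] with ω hω x hx
    rw [Metric.mem_ball, Real.dist_eq] at hx
    refine ⟨by linarith [(abs_lt.1 hx).1], ?_⟩
    linarith [abs_sub_abs_le_abs_sub x lam]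
  simp only [← integral_const_mul, ← integral_neg]
  refine (hasDerivAt_integral_of_dominated_loc_of_deriv_le (Metric.ball_mem_nhds lam hδ)
    (F := fun x ω => x * (Z ω * G ω ^ 2 / (x - Z ω)))
    (F' := fun x ω => -(Z ω * G ω / (x - Z ω)) ^ 2)
    (bound := fun ω => (1 + (|lam| + δ) / δ) ^ 2 * G ω ^ 2)
    (.of_forall fun x => (by fun_prop : AEMeasurable _ μ).aestronglyMeasurable) ?_
    (by fun_prop : AEMeasurable _ μ).aestronglyMeasurable ?_ (hG2.const_mul _) ?_).2
  · refine (hG2.const_mul (|lam| * (1 + |lam| / (lam - τ)))).mono'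
      (by fun_prop : AEMeasurable _ μ).aestronglyMeasurable ?_
    filter_upwards [hZτ] with ω hω
    calc ‖lam * (Z ω * G ω ^ 2 / (lam - Z ω))‖ = |lam| * (|Z ω / (lam - Z ω)| * G ω ^ 2) := by
          rw [Real.norm_eq_abs, mul_div_right_comm, abs_mul, abs_mul, abs_sq]
      _ ≤ |lam| * ((1 + |lam| / (lam - τ)) * G ω ^ 2) := by
          gcongr
          exact abs_div_sub_le (sub_pos.2 hlam) (by linarith) le_rfl
      _ = |lam| * (1 + |lam| / (lam - τ)) * G ω ^ 2 := by ring
  · filter_upwards [hgap] with ω hω x hx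
    rw [norm_neg, Real.norm_eq_abs, abs_sq]
    exact sq_mul_div_sub_le hδ (hω x hx).1 (hω x hx).2
  · filter_upwards [hgap] with ω hω x hx
    exact hasDerivAt_mul_div_sub _ _ (sub_pos.1 (hδ.trans_le (hω x hx).1)).ne'

theorem integral_sq_mul_div_sub_pos (hint : Integrable (fun ω => (Z ω * G ω / (lam - Z ω)) ^ 2) μ)
    (hZτ : ∀ᵐ ω ∂μ, Z ω ≤ τ) (hlam : τ < lam) (hZG : 0 < μ {ω | Z ω * G ω ≠ 0}) :
    0 < ∫ ω, (Z ω * G ω / (lam - Z ω)) ^ 2 ∂μ := by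
  rw [integral_pos_iff_support_of_nonneg_ae (.of_forall fun ω => sq_nonneg _) hint]
  refine hZG.trans_le (measure_mono_ae ?_)
  filter_upwards [hZτ] with ω hω hZGω
  exact pow_ne_zero 2 (div_ne_zero hZGω (sub_pos.2 (hω.trans_lt hlam)).ne')

end

theorem phi_strictAnti_general
    {Ω : Type*} [MeasureSpace Ω] [IsProbabilityMeasure (ℙ : Measure Ω)]
    (G Z : Ω → ℝ) (hGmeas : Measurable G) (hZmeas : Measurable Z)
    (hG : Measure.map G ℙ = gaussianReal 0 1)
    (hZbdd : ∃ C : ℝ, ∀ᵐ ω ∂ℙ, |Z ω| ≤ C)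
    (τ : ℝ) (hτ : τ = essSup Z ℙ)
    (hZG : 0 < ℙ {ω | Z ω * G ω ≠ 0})
    (φ : ℝ → ℝ)
    (hφ : ∀ lam : ℝ, φ lam = lam * ∫ ω, Z ω * (G ω) ^ 2 / (lam - Z ω) ∂ℙ) :
    (∀ lam ∈ Set.Ioi τ,
        HasDerivAt φ (-(∫ ω, (Z ω * G ω / (lam - Z ω)) ^ 2 ∂ℙ)) lam ∧
        -(∫ ω, (Z ω * G ω / (lam - Z ω)) ^ 2 ∂ℙ) < 0) ∧
    StrictAntiOn φ (Set.Ioi τ) := by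
  obtain ⟨C, hC⟩ := hZbdd
  have hZτ : ∀ᵐ ω ∂ℙ, Z ω ≤ τ :=
    hτ ▸ ae_le_essSup ⟨C, eventually_map.2 (hC.mono fun ω h => (abs_le.1 h).2)⟩
  have hG2 := integrable_sq_of_map_eq_gaussianReal hGmeas.aemeasurable hG
  have hderiv : ∀ lam ∈ Ioi τ, HasDerivAt φ (-(∫ ω, (Z ω * G ω / (lam - Z ω)) ^ 2 ∂ℙ)) lam ∧
      -(∫ ω, (Z ω * G ω / (lam - Z ω)) ^ 2 ∂ℙ) < 0 := fun lam hlam =>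
    ⟨funext hφ ▸
        hasDerivAt_mul_integral_div_sub hZmeas.aemeasurable hGmeas.aemeasurable hG2 hZτ hlam,
      neg_neg_of_pos <| integral_sq_mul_div_sub_pos
        (integrable_sq_mul_div_sub hZmeas.aemeasurable hGmeas.aemeasurable hG2 hZτ hlam)
        hZτ hlam hZG⟩
  refine ⟨hderiv, strictAntiOn_of_deriv_neg (convex_Ioi τ)
    (fun x hx => (hderiv x hx).1.continuousAt.continuousWithinAt) fun x hx => ?_⟩
  rw [interior_Ioi] at hx
  exact (hderiv x hx).1.deriv ▸ (hderiv x hx).2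

/-- Under the mixed-GLM spectral setup, the function
`φ(λ) = λ·𝔼[Z G² / (λ − Z)]` is differentiable on `(τ, ∞)` with
`φ′(λ) = −𝔼[(Z G/(λ−Z))²] < 0`, hence strictly decreasing there. -/
theorem phi_strictAnti
    {Ω : Type*} [MeasureSpace Ω] [IsProbabilityMeasure (ℙ : Measure Ω)]
    (G Z : Ω → ℝ) (hGmeas : Measurable G) (hZmeas : Measurable Z)
    (hG : Measure.map G ℙ = gaussianReal 0 1)
    (hZbdd : ∃ C : ℝ, ∀ᵐ ω ∂ℙ, |Z ω| ≤ C)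
    (τ : ℝ) (hτ : τ = essSup Z ℙ) (hτpos : 0 < τ)
    (hZ0 : ℙ {ω | Z ω = 0} < 1)
    (hZG : 0 < ℙ {ω | Z ω * G ω ≠ 0})
    (φ : ℝ → ℝ)
    (hφ : ∀ lam : ℝ, φ lam = lam * ∫ ω, Z ω * (G ω) ^ 2 / (lam - Z ω) ∂ℙ) :
    (∀ lam ∈ Set.Ioi τ,
        HasDerivAt φ (-(∫ ω, (Z ω * G ω / (lam - Z ω)) ^ 2 ∂ℙ)) lam ∧
        -(∫ ω, (Z ω * G ω / (lam - Z ω)) ^ 2 ∂ℙ) < 0) ∧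
    StrictAntiOn φ (Set.Ioi τ) :=
  phi_strictAnti_general G Z hGmeas hZmeas hG hZbdd τ hτ hZG φ hφ
end

section
/- Let Δ > 0 and suppose λ̄ ∈ (τ, ∞) satisfies 𝔼[(Z/(λ̄−Z))²] = 1/Δ. Then λ̄ is the unique global minimizer of ψ(·; Δ) on (τ, ∞): ψ(·; Δ) is strictly decreasing on (τ, λ̄] and strictly increasing on [λ̄, ∞), so that ψ(λ; Δ) > ψ(λ̄; Δ) for every λ ∈ (τ, ∞) with λ ≠ λ̄. -/
/-!
For `τ < l₁, l₂` the difference quotient of `ψ(·; Δ)` is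
`(ψ(l₂) - ψ(l₁)) / (l₂ - l₁) = 1/Δ - 𝔼[Z² / ((l₁ - Z)(l₂ - Z))]`,
and the expectation on the right is strictly decreasing in each of `l₁, l₂` because `Z` is not
a.s. zero. At `l₁ = l₂ = λ̄` it equals `1/Δ`, so the difference quotient is negative for
`l₁ < l₂ ≤ λ̄` and positive for `λ̄ ≤ l₁ < l₂`.
-/

open MeasureTheory ProbabilityTheory Real Set Filter

lemma integral_lt_integral_of_ae_le_of_measure_setOf_lt_ne_zero' {Ω : Type*} [MeasurableSpace Ω]
    {μ : Measure Ω} {f g : Ω → ℝ} (hf : Integrable f μ) (hg : Integrable g μ)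
    (hle : f ≤ᵐ[μ] g) (hlt : μ {ω | f ω < g ω} ≠ 0) :
    ∫ ω, f ω ∂μ < ∫ ω, g ω ∂μ := by
  rw [← sub_pos, ← integral_sub hg hf, integral_pos_iff_support_of_nonneg_ae
    (hle.mono fun _ => sub_nonneg.2) (hg.sub hf)]
  exact pos_iff_ne_zero.2 (mt (measure_mono_null fun ω hω => (sub_pos.2 hω).ne') hlt)

lemma sq_div_mul_sub_le_sq_div_mul_sub {z a b a' b' : ℝ} (ha : z < a) (hb : z < b)
    (haa' : a ≤ a') (hbb' : b ≤ b') :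
    z ^ 2 / ((a' - z) * (b' - z)) ≤ z ^ 2 / ((a - z) * (b - z)) := by
  apply div_le_div_of_nonneg_left (sq_nonneg z) (by nlinarith)
  exact mul_le_mul (by linarith) (by linarith) (by linarith) (by linarith)

lemma sq_div_mul_sub_lt_sq_div_mul_sub {z a b a' b' : ℝ} (hz : z ≠ 0) (ha : z < a) (hb : z < b)
    (haa' : a ≤ a') (hbb' : b ≤ b') (hlt : a < a' ∨ b < b') :
    z ^ 2 / ((a' - z) * (b' - z)) < z ^ 2 / ((a - z) * (b - z)) := by
  apply div_lt_div_of_pos_left (by positivity) (by nlinarith)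
  rcases hlt with h | h <;> nlinarith

noncomputable def resolventMoment {Ω : Type*} [MeasurableSpace Ω] (μ : Measure Ω) (Z : Ω → ℝ)
    (a b : ℝ) : ℝ :=
  ∫ ω, Z ω ^ 2 / ((a - Z ω) * (b - Z ω)) ∂μ

section ResolventMoment

variable {Ω : Type*} [MeasurableSpace Ω] {μ : Measure Ω} {Z : Ω → ℝ} {C τ : ℝ}

lemma resolventMoment_self (l : ℝ) :
    resolventMoment μ Z l l = ∫ ω, (Z ω / (l - Z ω)) ^ 2 ∂μ := by
  simp only [resolventMoment, div_pow, ← sq]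

variable [IsFiniteMeasure μ] (hZ : Measurable Z) (hC : ∀ᵐ ω ∂μ, |Z ω| ≤ C)
  (hτ : ∀ᵐ ω ∂μ, Z ω ≤ τ)
include hZ hC hτ

lemma integrable_div_sub {a : ℝ} (ha : τ < a) : Integrable (fun ω => Z ω / (a - Z ω)) μ := by
  refine .of_bound (by fun_prop : Measurable _).aestronglyMeasurable (C / (a - τ)) ?_
  filter_upwards [hC, hτ] with ω hCω hτω
  rw [norm_div, Real.norm_eq_abs, Real.norm_eq_abs, abs_of_pos (by linarith : 0 < a - Z ω)]
  exact div_le_div₀ ((abs_nonneg _).trans hCω) hCω (by linarith) (by linarith)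

lemma integrable_sq_div_mul_sub {a b : ℝ} (ha : τ < a) (hb : τ < b) :
    Integrable (fun ω => Z ω ^ 2 / ((a - Z ω) * (b - Z ω))) μ := by
  refine .of_bound (by fun_prop : Measurable _).aestronglyMeasurable
    (C ^ 2 / ((a - τ) * (b - τ))) ?_
  filter_upwards [hC, hτ] with ω hCω hτω
  rw [Real.norm_eq_abs, abs_of_nonneg (div_nonneg (sq_nonneg _)
    (mul_nonneg (by linarith) (by linarith)))]
  exact div_le_div₀ (sq_nonneg C) (sq_le_sq' (neg_le_of_abs_le hCω) (le_of_abs_le hCω))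
    (mul_pos (by linarith) (by linarith))
    (mul_le_mul (by linarith) (by linarith) (by linarith) (by linarith))

lemma mul_add_integral_div_sub_sub_mul_add_integral_div_sub (c : ℝ) {l₁ l₂ : ℝ}
    (h₁ : τ < l₁) (h₂ : τ < l₂) :
    l₂ * (c + ∫ ω, Z ω / (l₂ - Z ω) ∂μ) - l₁ * (c + ∫ ω, Z ω / (l₁ - Z ω) ∂μ)
      = (l₂ - l₁) * (c - resolventMoment μ Z l₁ l₂) := by
  have hpointwise : (fun ω => l₂ * (Z ω / (l₂ - Z ω)) - l₁ * (Z ω / (l₁ - Z ω)))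
      =ᵐ[μ] fun ω => -(l₂ - l₁) * (Z ω ^ 2 / ((l₁ - Z ω) * (l₂ - Z ω))) := by
    filter_upwards [hτ] with ω hω
    have : l₁ - Z ω ≠ 0 := by linarith
    have : l₂ - Z ω ≠ 0 := by linarith
    field_simp
    ring
  have hint := integral_congr_ae hpointwise
  rw [integral_sub ((integrable_div_sub hZ hC hτ h₂).const_mul l₂)
      ((integrable_div_sub hZ hC hτ h₁).const_mul l₁),
    integral_const_mul, integral_const_mul, integral_const_mul] at hint
  rw [resolventMoment]
  linear_combination hint

lemma resolventMoment_lt_resolventMoment (hZ0 : μ {ω | Z ω ≠ 0} ≠ 0) {a b a' b' : ℝ}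
    (ha : τ < a) (hb : τ < b) (haa' : a ≤ a') (hbb' : b ≤ b') (hlt : a < a' ∨ b < b') :
    resolventMoment μ Z a' b' < resolventMoment μ Z a b := by
  refine integral_lt_integral_of_ae_le_of_measure_setOf_lt_ne_zero'
    (integrable_sq_div_mul_sub hZ hC hτ (ha.trans_le haa') (hb.trans_le hbb'))
    (integrable_sq_div_mul_sub hZ hC hτ ha hb) ?_ ?_
  · filter_upwards [hτ] with ω hω
    exact sq_div_mul_sub_le_sq_div_mul_sub (by linarith) (by linarith) haa' hbb'
  · refine fun h => hZ0 (measure_mono_null_ae ?_ h)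
    filter_upwards [hτ] with ω hω hz
    exact sq_div_mul_sub_lt_sq_div_mul_sub hz (by linarith) (by linarith) haa' hbb' hlt

end ResolventMoment

theorem psi_unique_min_general
    {Ω : Type*} [MeasureSpace Ω] [IsProbabilityMeasure (ℙ : Measure Ω)]
    (Z : Ω → ℝ) (hZmeas : Measurable Z)
    (hZbdd : ∃ C : ℝ, ∀ᵐ ω ∂ℙ, |Z ω| ≤ C)
    (τ : ℝ) (hτ : τ = essSup Z ℙ)
    (hZ0 : ℙ {ω | Z ω = 0} < 1)
    (ψ : ℝ → ℝ → ℝ)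
    (hψ : ∀ (lam Δ : ℝ), ψ lam Δ = lam * (1 / Δ + ∫ ω, Z ω / (lam - Z ω) ∂ℙ))
    (Δ : ℝ)
    (lamBar : ℝ) (hlamBar : lamBar ∈ Set.Ioi τ)
    (hstat : ∫ ω, (Z ω / (lamBar - Z ω)) ^ 2 ∂ℙ = 1 / Δ) :
    StrictAntiOn (fun l => ψ l Δ) (Set.Ioc τ lamBar) ∧
    StrictMonoOn (fun l => ψ l Δ) (Set.Ici lamBar) ∧
    ∀ lam ∈ Set.Ioi τ, lam ≠ lamBar → ψ lamBar Δ < ψ lam Δ := by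
  obtain ⟨C, hC⟩ := hZbdd
  have hτae : ∀ᵐ ω ∂ℙ, Z ω ≤ τ :=
    hτ ▸ ae_le_essSup ⟨C, eventually_map.2 (hC.mono fun _ => le_of_abs_le)⟩
  have hZne : ℙ {ω | Z ω ≠ 0} ≠ 0 := fun h =>
    hZ0.ne ((prob_compl_eq_zero_iff (hZmeas (measurableSet_singleton 0))).1 h)
  have hmin : resolventMoment ℙ Z lamBar lamBar = 1 / Δ := by
    rw [resolventMoment_self, hstat]
  have hdiff {a b : ℝ} (ha : τ < a) (hb : τ < b) :
      ψ b Δ - ψ a Δ = (b - a) * (1 / Δ - resolventMoment ℙ Z a b) := by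
    rw [hψ, hψ, mul_add_integral_div_sub_sub_mul_add_integral_div_sub hZmeas hC hτae _ ha hb]
  have hanti : StrictAntiOn (fun l => ψ l Δ) (Set.Ioc τ lamBar) := by
    intro a ha b hb hab
    have hlt := resolventMoment_lt_resolventMoment hZmeas hC hτae hZne ha.1 hb.1
      (hab.le.trans hb.2) hb.2 (.inl (hab.trans_le hb.2))
    nlinarith [hdiff ha.1 hb.1]
  have hmono : StrictMonoOn (fun l => ψ l Δ) (Set.Ici lamBar) := by
    intro a ha b hb hab
    have hlt := resolventMoment_lt_resolventMoment hZmeas hC hτae hZne hlamBar hlamBar ha hb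
      (.inr (ha.trans_lt hab))
    nlinarith [hdiff (hlamBar.trans_le ha) (hlamBar.trans_le hb)]
  refine ⟨hanti, hmono, fun lam hlam hne => hne.lt_or_gt.elim (fun h => ?_) (fun h => ?_)⟩
  · exact hanti ⟨hlam, h.le⟩ ⟨hlamBar, le_rfl⟩ h
  · exact hmono self_mem_Ici h.le h

/-- If `λ̄ ∈ (τ,∞)` satisfies `𝔼[(Z/(λ̄−Z))²] = 1/Δ`, then `λ̄` is the unique global
minimizer of `ψ(·;Δ)` on `(τ,∞)`: `ψ(·;Δ)` is strictly decreasing on `(τ, λ̄]`,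
strictly increasing on `[λ̄, ∞)`, and `ψ(λ;Δ) > ψ(λ̄;Δ)` for `λ ∈ (τ,∞)`, `λ ≠ λ̄`. -/
theorem psi_unique_min
    {Ω : Type*} [MeasureSpace Ω] [IsProbabilityMeasure (ℙ : Measure Ω)]
    (G Z : Ω → ℝ) (hGmeas : Measurable G) (hZmeas : Measurable Z)
    (hG : Measure.map G ℙ = gaussianReal 0 1)
    (hZbdd : ∃ C : ℝ, ∀ᵐ ω ∂ℙ, |Z ω| ≤ C)
    (τ : ℝ) (hτ : τ = essSup Z ℙ) (hτpos : 0 < τ)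
    (hZ0 : ℙ {ω | Z ω = 0} < 1)
    (ψ : ℝ → ℝ → ℝ)
    (hψ : ∀ (lam Δ : ℝ), ψ lam Δ = lam * (1 / Δ + ∫ ω, Z ω / (lam - Z ω) ∂ℙ))
    (Δ : ℝ) (hΔ : 0 < Δ)
    (lamBar : ℝ) (hlamBar : lamBar ∈ Set.Ioi τ)
    (hstat : ∫ ω, (Z ω / (lamBar - Z ω)) ^ 2 ∂ℙ = 1 / Δ) :
    StrictAntiOn (fun l => ψ l Δ) (Set.Ioc τ lamBar) ∧
    StrictMonoOn (fun l => ψ l Δ) (Set.Ici lamBar) ∧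
    ∀ lam ∈ Set.Ioi τ, lam ≠ lamBar → ψ lamBar Δ < ψ lam Δ :=
  psi_unique_min_general Z hZmeas hZbdd τ hτ hZ0 ψ hψ Δ lamBar hlamBar hstat
end

section
/- Let δ₁ > δ₂ > 0 and suppose λ̄(δ₁), λ̄(δ₂) ∈ (τ, ∞) satisfy 𝔼[(Z/(λ̄(δᵢ)−Z))²] = 1/δᵢ for i = 1, 2. Define ζ(λ; δᵢ) := ψ(max{λ, λ̄(δᵢ)}; δᵢ) for λ > τ. Then ζ(λ; δ₁) < ζ(λ; δ₂) for every λ > τ. -/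
/-!
With `g_a := Z / (a - Z)`, the functional `ψ(a; δ) = a (1/δ + 𝔼 g_a)` satisfies the secant identity
`ψ(b; δ) - ψ(a; δ) = (b - a) (1/δ - 𝔼[g_a g_b])`, and `𝔼[g_a g_b]` decreases in `a` and `b`.
At a stationary point `λ̄`, where `𝔼[g_λ̄²] = 1/δ`, this makes `ψ(·; δ)` decrease up to `λ̄` and
increase after it, so `ψ(max{λ, λ̄}; δ)` is the minimum of `ψ(·; δ)` on `[λ, ∞)`. Hence
`ζ(λ; δ₁) ≤ ψ(max{λ, λ̄(δ₂)}; δ₁) < ψ(max{λ, λ̄(δ₂)}; δ₂) = ζ(λ; δ₂)`, the strict step because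
`1/δ₁ < 1/δ₂` and the argument is positive.
-/

open MeasureTheory ProbabilityTheory Real Set Filter

namespace ZetaOrdering

lemma abs_div_sub_le {z a τ : ℝ} (hz : z ≤ τ) (ha : τ < a) :
    |z / (a - z)| ≤ 1 + |a| / (a - τ) := by
  have hpos : 0 < a - z := by linarith
  have hsplit : z / (a - z) = a / (a - z) - 1 := by field_simp; ring
  calc |z / (a - z)| ≤ |a / (a - z)| + |1| := hsplit ▸ abs_sub _ _
    _ = |a| / (a - z) + 1 := by rw [abs_div, abs_of_pos hpos, abs_one]
    _ ≤ 1 + |a| / (a - τ) := by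
      rw [add_comm]
      gcongr

lemma mul_div_sub_le {z τ a a' b b' : ℝ} (hz : z ≤ τ) (ha : τ < a) (hb : τ < b)
    (haa' : a ≤ a') (hbb' : b ≤ b') :
    z / (a' - z) * (z / (b' - z)) ≤ z / (a - z) * (z / (b - z)) := by
  rw [div_mul_div_comm, div_mul_div_comm, ← sq]
  exact div_le_div_of_nonneg_left (sq_nonneg z) (mul_pos (by linarith) (by linarith))
    (mul_le_mul (by linarith) (by linarith) (by linarith) (by linarith))

noncomputable def psi {Ω : Type*} [MeasurableSpace Ω] (μ : Measure Ω) (Z : Ω → ℝ) (a δ : ℝ) : ℝ :=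
  a * (1 / δ + ∫ ω, Z ω / (a - Z ω) ∂μ)

/-- On the diagonal, the left side of the stationarity condition `𝔼[(Z / (λ̄ - Z))²] = 1/δ`. -/
noncomputable def resolventCorr {Ω : Type*} [MeasurableSpace Ω] (μ : Measure Ω) (Z : Ω → ℝ)
    (a b : ℝ) : ℝ :=
  ∫ ω, Z ω / (a - Z ω) * (Z ω / (b - Z ω)) ∂μ

variable {Ω : Type*} [MeasurableSpace Ω] {μ : Measure Ω} {Z : Ω → ℝ}

lemma psi_lt_psi_of_delta_lt {a δ₁ δ₂ : ℝ} (ha : 0 < a) (hδ₂ : 0 < δ₂) (hδ : δ₂ < δ₁) :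
    psi μ Z a δ₁ < psi μ Z a δ₂ := by
  unfold psi
  gcongr

variable [IsFiniteMeasure μ] {τ : ℝ}

lemma integrable_div_sub (hZ : AEMeasurable Z μ) (hτ : ∀ᵐ ω ∂μ, Z ω ≤ τ) {a : ℝ} (ha : τ < a) :
    Integrable (fun ω => Z ω / (a - Z ω)) μ :=
  .of_bound (hZ.div (aemeasurable_const.sub hZ)).aestronglyMeasurable _
    (hτ.mono fun _ hz => abs_div_sub_le hz ha)

lemma integrable_mul_div_sub (hZ : AEMeasurable Z μ) (hτ : ∀ᵐ ω ∂μ, Z ω ≤ τ) {a b : ℝ}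
    (ha : τ < a) (hb : τ < b) :
    Integrable (fun ω => Z ω / (a - Z ω) * (Z ω / (b - Z ω))) μ :=
  (integrable_div_sub hZ hτ hb).bdd_mul (hZ.div (aemeasurable_const.sub hZ)).aestronglyMeasurable
    (hτ.mono fun _ hz => abs_div_sub_le hz ha)

lemma resolventCorr_anti (hZ : AEMeasurable Z μ) (hτ : ∀ᵐ ω ∂μ, Z ω ≤ τ) {a a' b b' : ℝ}
    (ha : τ < a) (hb : τ < b) (haa' : a ≤ a') (hbb' : b ≤ b') :
    resolventCorr μ Z a' b' ≤ resolventCorr μ Z a b :=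
  integral_mono_ae (integrable_mul_div_sub hZ hτ (ha.trans_le haa') (hb.trans_le hbb'))
    (integrable_mul_div_sub hZ hτ ha hb) (hτ.mono fun _ hz => mul_div_sub_le hz ha hb haa' hbb')

lemma psi_sub_psi (hZ : AEMeasurable Z μ) (hτ : ∀ᵐ ω ∂μ, Z ω ≤ τ) {a b : ℝ} (ha : τ < a)
    (hb : τ < b) (δ : ℝ) :
    psi μ Z b δ - psi μ Z a δ = (b - a) * (1 / δ - resolventCorr μ Z a b) := by
  have hpoint : ∀ᵐ ω ∂μ, b * (Z ω / (b - Z ω)) - a * (Z ω / (a - Z ω))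
      = (b - a) * -(Z ω / (a - Z ω) * (Z ω / (b - Z ω))) := by
    filter_upwards [hτ] with ω hz
    have : a - Z ω ≠ 0 := by linarith
    have : b - Z ω ≠ 0 := by linarith
    field_simp
    ring
  have hint : b * ∫ ω, Z ω / (b - Z ω) ∂μ - a * ∫ ω, Z ω / (a - Z ω) ∂μ
      = (b - a) * -resolventCorr μ Z a b := by
    rw [resolventCorr, ← integral_const_mul, ← integral_const_mul, ← integral_sub
      ((integrable_div_sub hZ hτ hb).const_mul b) ((integrable_div_sub hZ hτ ha).const_mul a),
      integral_congr_ae hpoint, integral_const_mul, integral_neg]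
  simp only [psi, mul_add]
  linear_combination hint

section Stationary

variable (hZ : AEMeasurable Z μ) (hτ : ∀ᵐ ω ∂μ, Z ω ≤ τ) {c δ : ℝ}
  (hstat : resolventCorr μ Z c c = 1 / δ)
include hZ hτ hstat

lemma psi_monotoneOn (hc : τ < c) : MonotoneOn (psi μ Z · δ) (Ici c) := by
  intro a ha b hb hab
  have hcorr := resolventCorr_anti hZ hτ hc hc ha (ha.trans hab)
  have := psi_sub_psi hZ hτ (hc.trans_le ha) (hc.trans_le hb) δ
  nlinarith

lemma psi_antitoneOn : AntitoneOn (psi μ Z · δ) (Ioc τ c) := by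
  intro a ha b hb hab
  have hcorr := resolventCorr_anti hZ hτ ha.1 hb.1 (hab.trans hb.2) hb.2
  have := psi_sub_psi hZ hτ ha.1 hb.1 δ
  nlinarith

lemma psi_max_le (hc : τ < c) {lam a : ℝ} (ha : τ < a) (hlam : lam ≤ a) :
    psi μ Z (max lam c) δ ≤ psi μ Z a δ := by
  rcases le_total c a with hca | hac
  · exact psi_monotoneOn hZ hτ hstat hc (le_max_right lam c) hca (max_le hlam hca)
  · rw [max_eq_right (hlam.trans hac)]
    exact psi_antitoneOn hZ hτ hstat ⟨ha, hac⟩ ⟨hc, le_rfl⟩ hac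

end Stationary

end ZetaOrdering

open ZetaOrdering in
theorem zeta_ordering_general
    {Ω : Type*} [MeasureSpace Ω] [IsProbabilityMeasure (ℙ : Measure Ω)]
    (Z : Ω → ℝ) (hZmeas : Measurable Z)
    (hZbdd : ∃ C : ℝ, ∀ᵐ ω ∂ℙ, |Z ω| ≤ C)
    (τ : ℝ) (hτ : τ = essSup Z ℙ) (hτpos : 0 < τ)
    (ψ : ℝ → ℝ → ℝ)
    (hψ : ∀ (lam Δ : ℝ), ψ lam Δ = lam * (1 / Δ + ∫ ω, Z ω / (lam - Z ω) ∂ℙ))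
    (δ₁ δ₂ : ℝ) (hδ₂ : 0 < δ₂) (hδ : δ₂ < δ₁)
    (lamBar₁ lamBar₂ : ℝ)
    (hlamBar₁ : lamBar₁ ∈ Set.Ioi τ)
    (hstat₁ : ∫ ω, (Z ω / (lamBar₁ - Z ω)) ^ 2 ∂ℙ = 1 / δ₁) :
    ∀ lam : ℝ, τ < lam → ψ (max lam lamBar₁) δ₁ < ψ (max lam lamBar₂) δ₂ := by
  obtain rfl : ψ = psi ℙ Z := funext₂ hψ
  obtain ⟨C, hC⟩ := hZbdd
  have hZτ : ∀ᵐ ω ∂ℙ, Z ω ≤ τ :=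
    hτ ▸ ae_le_essSup ⟨C, eventually_map.2 (hC.mono fun _ h => (abs_le.1 h).2)⟩
  have hcorr : resolventCorr ℙ Z lamBar₁ lamBar₁ = 1 / δ₁ := by
    rw [← hstat₁]; simp only [resolventCorr, sq]
  intro lam hlam
  have hμ₂ : τ < max lam lamBar₂ := lt_max_of_lt_left hlam
  calc psi ℙ Z (max lam lamBar₁) δ₁
      ≤ psi ℙ Z (max lam lamBar₂) δ₁ :=
        psi_max_le hZmeas.aemeasurable hZτ hcorr hlamBar₁ hμ₂ (le_max_left _ _)
    _ < psi ℙ Z (max lam lamBar₂) δ₂ := psi_lt_psi_of_delta_lt (hτpos.trans hμ₂) hδ₂ hδ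

/-- For `δ₁ > δ₂ > 0` with respective stationary points `λ̄(δ₁), λ̄(δ₂) ∈ (τ,∞)`,
the functions `ζ(λ; δᵢ) = ψ(max{λ, λ̄(δᵢ)}; δᵢ)` satisfy `ζ(λ;δ₁) < ζ(λ;δ₂)`
for every `λ > τ`. -/
theorem zeta_ordering
    {Ω : Type*} [MeasureSpace Ω] [IsProbabilityMeasure (ℙ : Measure Ω)]
    (G Z : Ω → ℝ) (hGmeas : Measurable G) (hZmeas : Measurable Z)
    (hG : Measure.map G ℙ = gaussianReal 0 1)
    (hZbdd : ∃ C : ℝ, ∀ᵐ ω ∂ℙ, |Z ω| ≤ C)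
    (τ : ℝ) (hτ : τ = essSup Z ℙ) (hτpos : 0 < τ)
    (hZ0 : ℙ {ω | Z ω = 0} < 1)
    (ψ : ℝ → ℝ → ℝ)
    (hψ : ∀ (lam Δ : ℝ), ψ lam Δ = lam * (1 / Δ + ∫ ω, Z ω / (lam - Z ω) ∂ℙ))
    (δ₁ δ₂ : ℝ) (hδ₂ : 0 < δ₂) (hδ : δ₂ < δ₁)
    (lamBar₁ lamBar₂ : ℝ)
    (hlamBar₁ : lamBar₁ ∈ Set.Ioi τ) (hlamBar₂ : lamBar₂ ∈ Set.Ioi τ)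
    (hstat₁ : ∫ ω, (Z ω / (lamBar₁ - Z ω)) ^ 2 ∂ℙ = 1 / δ₁)
    (hstat₂ : ∫ ω, (Z ω / (lamBar₂ - Z ω)) ^ 2 ∂ℙ = 1 / δ₂) :
    ∀ lam : ℝ, τ < lam → ψ (max lam lamBar₁) δ₁ < ψ (max lam lamBar₂) δ₂ :=
  zeta_ordering_general Z hZmeas hZbdd τ hτ hτpos ψ hψ δ₁ δ₂ hδ₂ hδ lamBar₁ lamBar₂ hlamBar₁ hstat₁
end

section
/- The universal bound ∫_S (m₂(y) − m₀(y))²/m₀(y) dy ≤ 2 holds, regardless of the choice of the kernel p. -/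
/-! For fixed `y`, Cauchy–Schwarz for the finite measure `γ(g) p(y|g) dg` gives
`(m₂ − m₀)² / m₀ = (∫ (g² − 1) γ(g) p(y|g) dg)² / m₀ ≤ ∫ (g² − 1)² γ(g) p(y|g) dg`.
Integrating over `y` and swapping the integrals (Tonelli, with `∫ p(y|g) dy = 1`) leaves
`E[(G² − 1)²] = Var(G²) = 2` for a standard Gaussian `G`. -/

open MeasureTheory Real Set
open scoped ENNReal

open Polynomial in
theorem Polynomial.integrable_eval_mul_exp_neg_mul_sq {b : ℝ} (hb : 0 < b) (P : ℝ[X]) :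
    Integrable fun x : ℝ => P.eval x * exp (-b * x ^ 2) := by
  simp_rw [eval_eq_sum_range, Finset.sum_mul, mul_assoc]
  refine integrable_finsetSum _ fun n _ => Integrable.const_mul ?_ _
  simpa [Real.rpow_natCast] using
    integrable_rpow_mul_exp_neg_mul_sq hb (s := n) (by linarith [n.cast_nonneg (α := ℝ)])

theorem Polynomial.integrable_eval_mul_exp_neg_sq_div_two (P : Polynomial ℝ) :
    Integrable fun x : ℝ => P.eval x * exp (-(x ^ 2) / 2) := by
  convert integrable_eval_mul_exp_neg_mul_sq (b := 1 / 2) (by norm_num) P using 4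
  ring

open Polynomial in
theorem integrable_sq_sub_one_sq_mul_exp_neg_sq_div_two :
    Integrable fun x : ℝ => (x ^ 2 - 1) ^ 2 * exp (-(x ^ 2) / 2) := by
  have := integrable_eval_mul_exp_neg_sq_div_two ((X ^ 2 - 1) ^ 2)
  simpa only [eval_pow, eval_sub, eval_X, eval_one] using this

theorem integral_exp_neg_sq_div_two : ∫ x : ℝ, exp (-(x ^ 2) / 2) = √(2 * π) := by
  convert integral_gaussian (1 / 2) using 4 <;> ring

open Polynomial in
theorem integral_sq_sub_one_sq_mul_exp_neg_sq_div_two :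
    ∫ x : ℝ, (x ^ 2 - 1) ^ 2 * exp (-(x ^ 2) / 2) = 2 * √(2 * π) := by
  have hderiv (x : ℝ) : HasDerivAt (fun x => -(x ^ 3 + x) * exp (-(x ^ 2) / 2))
      (((x ^ 2 - 1) ^ 2 - 2) * exp (-(x ^ 2) / 2)) x := by
    refine ((((hasDerivAt_pow 3 x).add (hasDerivAt_id' x)).neg).mul
      ((((hasDerivAt_pow 2 x).neg).div_const 2).exp)).congr_deriv ?_
    simp only [Pi.neg_apply, Pi.add_apply]
    push_cast
    ring
  have hint_deriv := integrable_eval_mul_exp_neg_sq_div_two ((X ^ 2 - 1) ^ 2 - 2)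
  have hint_prim := integrable_eval_mul_exp_neg_sq_div_two (-(X ^ 3 + X))
  have hint_two := integrable_eval_mul_exp_neg_sq_div_two 2
  simp only [eval_pow, eval_sub, eval_neg, eval_add, eval_X, eval_one, eval_ofNat]
    at hint_deriv hint_prim hint_two
  have hzero := integral_eq_zero_of_hasDerivAt_of_integrable hderiv hint_deriv hint_prim
  calc ∫ x : ℝ, (x ^ 2 - 1) ^ 2 * exp (-(x ^ 2) / 2)
      = ∫ x : ℝ, (((x ^ 2 - 1) ^ 2 - 2) * exp (-(x ^ 2) / 2) + 2 * exp (-(x ^ 2) / 2)) := by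
        congr 1; ext x; ring
    _ = 2 * √(2 * π) := by
        rw [integral_add hint_deriv hint_two, hzero, integral_const_mul,
          integral_exp_neg_sq_div_two, zero_add]

section WeightedCauchySchwarz

variable {α : Type*} [MeasurableSpace α] {μ : Measure α} {f h : α → ℝ}

theorem integrable_mul_of_integrable_sq_mul (hh : AEStronglyMeasurable h μ) (hf : 0 ≤ᵐ[μ] f)
    (hfi : Integrable f μ) (hhf : Integrable (fun x => h x ^ 2 * f x) μ) :
    Integrable (fun x => h x * f x) μ := by
  refine ((hhf.add hfi).div_const 2).mono' (hh.mul hfi.1) ?_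
  filter_upwards [hf] with x (hx : 0 ≤ f x)
  have hamgm : 2 * |h x| ≤ h x ^ 2 + 1 := by nlinarith [sq_nonneg (|h x| - 1), sq_abs (h x)]
  rw [Pi.add_apply, norm_mul, Real.norm_eq_abs, Real.norm_of_nonneg hx]
  nlinarith [mul_le_mul_of_nonneg_right hamgm hx]

theorem sq_integral_mul_le_integral_mul_integral_sq_mul (hf : 0 ≤ᵐ[μ] f) (hfi : Integrable f μ)
    (hhf : Integrable (fun x => h x * f x) μ) (hh2f : Integrable (fun x => h x ^ 2 * f x) μ) :
    (∫ x, h x * f x ∂μ) ^ 2 ≤ (∫ x, f x ∂μ) * ∫ x, h x ^ 2 * f x ∂μ := by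
  have hquad (t : ℝ) : 0 ≤ (∫ x, f x ∂μ) * (t * t) + (-2 * ∫ x, h x * f x ∂μ) * t
      + ∫ x, h x ^ 2 * f x ∂μ := by
    have hexpand : (fun x => (t - h x) ^ 2 * f x)
        = fun x => (t * t) * f x + (-2 * t) * (h x * f x) + h x ^ 2 * f x := by
      ext x; ring
    have hnonneg : 0 ≤ ∫ x, (t - h x) ^ 2 * f x ∂μ :=
      integral_nonneg_of_ae (by filter_upwards [hf] with x (hx : 0 ≤ f x) using by positivity)
    rw [hexpand, integral_add ?_ hh2f, integral_add ?_ ?_, integral_const_mul,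
      integral_const_mul] at hnonneg
    · linarith
    exacts [hfi.const_mul _, hhf.const_mul _, (hfi.const_mul _).add (hhf.const_mul _)]
  have := discrim_le_zero hquad
  rw [discrim] at this
  linarith

end WeightedCauchySchwarz

theorem ofReal_sq_integral_sub_div_integral_le_lintegral {α : Type*} [MeasurableSpace α]
    {μ : Measure α} {f k : α → ℝ} (hf : 0 ≤ᵐ[μ] f) (hfm : AEStronglyMeasurable f μ)
    (hk : AEStronglyMeasurable k μ) :
    ENNReal.ofReal ((∫ x, k x * f x ∂μ - ∫ x, f x ∂μ) ^ 2 / ∫ x, f x ∂μ)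
      ≤ ∫⁻ x, ENNReal.ofReal ((k x - 1) ^ 2 * f x) ∂μ := by
  by_cases hfi : Integrable f μ
  swap
  · simp [integral_undef hfi]
  by_cases hfin : ∫⁻ x, ENNReal.ofReal ((k x - 1) ^ 2 * f x) ∂μ = ⊤
  · simp [hfin]
  have hk1 : AEStronglyMeasurable (fun x => k x - 1) μ := hk.sub aestronglyMeasurable_const
  have hnonneg : 0 ≤ᵐ[μ] fun x => (k x - 1) ^ 2 * f x := by
    filter_upwards [hf] with x (hx : 0 ≤ f x) using by positivity
  have hsq : Integrable (fun x => (k x - 1) ^ 2 * f x) μ :=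
    ⟨(hk1.pow 2).mul hfm, (hasFiniteIntegral_iff_ofReal hnonneg).2 (lt_top_iff_ne_top.2 hfin)⟩
  have hlin := integrable_mul_of_integrable_sq_mul hk1 hf hfi hsq
  have hdiff : ∫ x, k x * f x ∂μ - ∫ x, f x ∂μ = ∫ x, (k x - 1) * f x ∂μ := by
    have : (fun x => k x * f x) = fun x => (k x - 1) * f x + f x := by ext x; ring
    rw [this, integral_add hlin hfi, add_sub_cancel_right]
  rw [hdiff, ← ofReal_integral_eq_lintegral_ofReal hsq hnonneg]
  exact ENNReal.ofReal_le_ofReal <| div_le_of_le_mul₀ (integral_nonneg_of_ae hf)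
    (integral_nonneg_of_ae hnonneg)
    ((sq_integral_mul_le_integral_mul_integral_sq_mul hf hfi hlin hsq).trans_eq (mul_comm _ _))

theorem lintegral_lintegral_mul_ofReal_eq_lintegral {α β : Type*} [MeasurableSpace α]
    [MeasurableSpace β] {μ : Measure α} {ν : Measure β} [SFinite μ] [SFinite ν]
    {p : α → β → ℝ} (hp : Measurable (Function.uncurry p)) (hp_nonneg : ∀ a b, 0 ≤ p a b)
    (hp_norm : ∀ a, ∫ b, p a b ∂ν = 1) {w : α → ℝ≥0∞} (hw : Measurable w) :
    ∫⁻ b, ∫⁻ a, w a * ENNReal.ofReal (p a b) ∂μ ∂ν = ∫⁻ a, w a ∂μ := by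
  rw [lintegral_lintegral_swap
    ((hw.comp measurable_snd).mul (hp.comp measurable_swap).ennreal_ofReal).aemeasurable]
  refine lintegral_congr fun a => ?_
  have hpa : Integrable (p a) ν := .of_integral_ne_zero (by simp [hp_norm a])
  have hpa_meas : Measurable (p a) := hp.comp measurable_prodMk_left
  rw [lintegral_const_mul _ hpa_meas.ennreal_ofReal,
    ← ofReal_integral_eq_lintegral_ofReal hpa (ae_of_all _ (hp_nonneg a)), hp_norm,
    ENNReal.ofReal_one, mul_one]

theorem lintegral_sq_sub_one_sq_mul_gaussian_eq_two :
    ∫⁻ x : ℝ, ENNReal.ofReal ((x ^ 2 - 1) ^ 2 * (exp (-(x ^ 2) / 2) / √(2 * π))) = 2 := by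
  simp_rw [← mul_div_assoc]
  rw [← ofReal_integral_eq_lintegral_ofReal
    (integrable_sq_sub_one_sq_mul_exp_neg_sq_div_two.div_const _)
    (ae_of_all _ fun x => by positivity), integral_div,
    integral_sq_sub_one_sq_mul_exp_neg_sq_div_two, mul_div_assoc,
    div_self (by positivity), mul_one, ENNReal.ofReal_ofNat]

/-- Universal bound: `∫_S (m₂ − m₀)²/m₀ ≤ 2`, where `S = {m₀ > 0}`, for any Markov
kernel `p(·|g)` and the Gaussian mixture moments `m₀, m₂`. -/
theorem universal_second_moment_bound
    (p : ℝ → ℝ → ℝ)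
    (hp_meas : Measurable (Function.uncurry p))
    (hp_nonneg : ∀ g y, 0 ≤ p g y)
    (hp_norm : ∀ g, ∫ y, p g y = 1)
    (m₀ m₂ : ℝ → ℝ)
    (hm₀ : ∀ y, m₀ y = ∫ g, Real.exp (-(g ^ 2) / 2) / Real.sqrt (2 * Real.pi) * p g y)
    (hm₂ : ∀ y, m₂ y =
      ∫ g, g ^ 2 * (Real.exp (-(g ^ 2) / 2) / Real.sqrt (2 * Real.pi)) * p g y) :
    ∫⁻ y in {y : ℝ | 0 < m₀ y}, ENNReal.ofReal ((m₂ y - m₀ y) ^ 2 / m₀ y) ≤ 2 := by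
  set γ : ℝ → ℝ := fun g => exp (-(g ^ 2) / 2) / √(2 * π)
  have hγ_meas : Measurable γ := by fun_prop
  have hpointwise (y : ℝ) : ENNReal.ofReal ((m₂ y - m₀ y) ^ 2 / m₀ y)
      ≤ ∫⁻ g, ENNReal.ofReal ((g ^ 2 - 1) ^ 2 * γ g) * ENNReal.ofReal (p g y) := by
    calc ENNReal.ofReal ((m₂ y - m₀ y) ^ 2 / m₀ y)
        = ENNReal.ofReal (((∫ g, g ^ 2 * (γ g * p g y)) - ∫ g, γ g * p g y) ^ 2
            / ∫ g, γ g * p g y) := by simp_rw [hm₀, hm₂, mul_assoc, γ]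
      _ ≤ ∫⁻ g, ENNReal.ofReal ((g ^ 2 - 1) ^ 2 * (γ g * p g y)) :=
          ofReal_sq_integral_sub_div_integral_le_lintegral (f := fun g => γ g * p g y)
            (k := fun g => g ^ 2) (μ := volume)
            (ae_of_all _ fun g => mul_nonneg (by positivity) (hp_nonneg g y))
            (hγ_meas.mul (hp_meas.comp measurable_prodMk_right)).aestronglyMeasurable
            (by fun_prop)
      _ = _ := lintegral_congr fun g => by rw [← mul_assoc, ENNReal.ofReal_mul (by positivity)]
  calc ∫⁻ y in {y : ℝ | 0 < m₀ y}, ENNReal.ofReal ((m₂ y - m₀ y) ^ 2 / m₀ y)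
      ≤ ∫⁻ y, ENNReal.ofReal ((m₂ y - m₀ y) ^ 2 / m₀ y) := setLIntegral_le_lintegral _ _
    _ ≤ ∫⁻ y, ∫⁻ g, ENNReal.ofReal ((g ^ 2 - 1) ^ 2 * γ g) * ENNReal.ofReal (p g y) :=
        lintegral_mono hpointwise
    _ = ∫⁻ g, ENNReal.ofReal ((g ^ 2 - 1) ^ 2 * γ g) :=
        lintegral_lintegral_mul_ofReal_eq_lintegral hp_meas hp_nonneg hp_norm (by fun_prop)
    _ = 2 := lintegral_sq_sub_one_sq_mul_gaussian_eq_two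
end

section
/- Let α ∈ (0, 1], δ > 0, and suppose K := ∫_S (m₂ − m₀)²/m₀ dy ∈ (0, ∞). If a measurable function Γ : ℝ → ℝ satisfies ∫_S m₀(y)·Γ(y)² dy = 1/δ and ∫_S (m₂(y) − m₀(y))·Γ(y) dy > 1/(αδ) (the latter integral being absolutely convergent), then δ > 1/(α²·K); in particular, δ > 1/(2α²). -/
/-!
On `S = {m₀ > 0}` weighted AM-GM gives `(m₂ - m₀) Γ ≤ (α/2) (m₂ - m₀)² / m₀ + m₀ Γ² / (2α)`;
integrating, `1/(αδ) < αK/2 + 1/(2αδ)`, i.e. `α²Kδ > 1`.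

For `K ≤ 2`: Cauchy-Schwarz for the weight `γ(g) p(y|g)` bounds `(m₂ - m₀)² / m₀` by
`∫ (g² - 1)² γ(g) p(y|g) dg`. Integrating in `y` (Tonelli, `∫ p(y|g) dy = 1`) leaves
`E[(G² - 1)²] = 2` for a standard Gaussian `G`.
-/

open MeasureTheory Real Set ProbabilityTheory

lemma gaussianPDFReal_zero_one_apply (x : ℝ) :
    gaussianPDFReal 0 1 x = Real.exp (-(x ^ 2) / 2) / Real.sqrt (2 * Real.pi) := by
  simp [gaussianPDFReal, div_eq_inv_mul]

lemma integrable_pow_mul_gaussianPDFReal_zero_one (n : ℕ) :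
    Integrable fun x : ℝ => x ^ n * gaussianPDFReal 0 1 x := by
  have h := (integrable_rpow_mul_exp_neg_mul_sq (b := 1 / 2) (by norm_num)
    (s := n) (by linarith [n.cast_nonneg (α := ℝ)])).div_const (Real.sqrt (2 * Real.pi))
  refine h.congr (ae_of_all _ fun x => ?_)
  simp only [gaussianPDFReal_zero_one_apply, Real.rpow_natCast]
  ring_nf

lemma hasDerivAt_gaussianPDFReal_zero_one (x : ℝ) :
    HasDerivAt (gaussianPDFReal 0 1) (-x * gaussianPDFReal 0 1 x) x := by
  have h := ((((hasDerivAt_pow 2 x).neg.div_const 2).exp).div_const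
    (Real.sqrt (2 * Real.pi)))
  rw [funext gaussianPDFReal_zero_one_apply]
  exact h.congr_deriv (by simp only [Pi.neg_apply]; push_cast; ring)

/-- `(x²-1)² φ = 2 φ - ((x³ + x) φ)'`, and the boundary terms vanish. -/
lemma integral_sq_sub_one_sq_mul_gaussianPDFReal_zero_one :
    ∫ x : ℝ, (x ^ 2 - 1) ^ 2 * gaussianPDFReal 0 1 x = 2 := by
  set φ := gaussianPDFReal 0 1
  have hderiv : ∀ x, HasDerivAt (fun x => (x ^ 3 + x) * φ x)
      ((1 + 2 * x ^ 2 - x ^ 4) * φ x) x := fun x =>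
    (((hasDerivAt_pow 3 x).add (hasDerivAt_id' x)).mul
      (hasDerivAt_gaussianPDFReal_zero_one x)).congr_deriv
        (by simp only [Pi.add_apply, φ]; push_cast; ring)
  have hI := integrable_pow_mul_gaussianPDFReal_zero_one
  have hderiv_int : Integrable fun x => (1 + 2 * x ^ 2 - x ^ 4) * φ x :=
    (((hI 0).add ((hI 2).const_mul 2)).sub (hI 4)).congr
      (ae_of_all _ fun x => by simp only [Pi.add_apply, Pi.sub_apply]; ring)
  have hprim_int : Integrable fun x => (x ^ 3 + x) * φ x :=
    ((hI 3).add (hI 1)).congr (ae_of_all _ fun x => by simp only [Pi.add_apply]; ring)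
  have hzero := integral_eq_zero_of_hasDerivAt_of_integrable hderiv hderiv_int hprim_int
  calc ∫ x, (x ^ 2 - 1) ^ 2 * φ x = ∫ x, (2 * φ x - (1 + 2 * x ^ 2 - x ^ 4) * φ x) :=
        integral_congr_ae (ae_of_all _ fun x => by ring)
    _ = 2 := by
        rw [integral_sub ((integrable_gaussianPDFReal 0 1).const_mul 2) hderiv_int, hzero,
          integral_const_mul, integral_gaussianPDFReal_eq_one 0 one_ne_zero]
        norm_num

section WeightedCauchySchwarz

variable {α : Type*} [MeasurableSpace α] {μ : Measure α} {f w : α → ℝ}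

lemma MeasureTheory.Integrable.mul_of_sq_mul (hf : AEStronglyMeasurable f μ)
    (hw : ∀ x, 0 ≤ w x) (hw_int : Integrable w μ) (hf2w : Integrable (fun x => f x ^ 2 * w x) μ) :
    Integrable (fun x => f x * w x) μ := by
  refine ((hf2w.add hw_int).div_const 2).mono' (hf.mul hw_int.aestronglyMeasurable)
    (ae_of_all _ fun x => ?_)
  rw [norm_mul, Real.norm_eq_abs, Real.norm_eq_abs, abs_of_nonneg (hw x)]
  simp only [Pi.add_apply]
  nlinarith [hw x, mul_nonneg (hw x) (sq_nonneg (|f x| - 1)), sq_abs (f x)]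

/-- The quadratic `t ↦ ∫ (f - t)² w` is nonnegative, so its discriminant is nonpositive. -/
lemma sq_integral_mul_le (hf : AEStronglyMeasurable f μ) (hw : ∀ x, 0 ≤ w x)
    (hw_int : Integrable w μ) (hf2w : Integrable (fun x => f x ^ 2 * w x) μ) :
    (∫ x, f x * w x ∂μ) ^ 2 ≤ (∫ x, w x ∂μ) * ∫ x, f x ^ 2 * w x ∂μ := by
  have hfw := hw_int.mul_of_sq_mul hf hw hf2w
  have hquad : ∀ t : ℝ, 0 ≤ (∫ x, w x ∂μ) * (t * t) + (-2 * ∫ x, f x * w x ∂μ) * t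
      + ∫ x, f x ^ 2 * w x ∂μ := fun t => by
    have hexp : ∫ x, (f x - t) ^ 2 * w x ∂μ = (∫ x, w x ∂μ) * (t * t)
        + (-2 * ∫ x, f x * w x ∂μ) * t + ∫ x, f x ^ 2 * w x ∂μ := by
      calc ∫ x, (f x - t) ^ 2 * w x ∂μ
          = ∫ x, (f x ^ 2 * w x + (-2 * t) * (f x * w x) + (t * t) * w x) ∂μ :=
            integral_congr_ae (ae_of_all _ fun x => by ring)
        _ = _ := by
          rw [integral_add _ (hw_int.const_mul _), integral_add hf2w (hfw.const_mul _),
            integral_const_mul, integral_const_mul]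
          · ring
          · exact hf2w.add (hfw.const_mul _)
    rw [← hexp]
    exact integral_nonneg fun x => mul_nonneg (sq_nonneg _) (hw x)
  have hdisc := discrim_le_zero hquad
  rw [discrim] at hdisc
  nlinarith

end WeightedCauchySchwarz

section Kernel

variable {α β : Type*} [MeasurableSpace α] [MeasurableSpace β] {μ : Measure α} {ν : Measure β}
  [SFinite μ] [SFinite ν]

lemma lintegral_lintegral_ofReal_mul_eq {p : α → β → ℝ} (hp_meas : Measurable (Function.uncurry p))
    (hp_nonneg : ∀ g y, 0 ≤ p g y) (hp_norm : ∀ g, ∫ y, p g y ∂ν = 1) {h : α → ℝ}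
    (hh : Measurable h) (hh_nonneg : ∀ g, 0 ≤ h g) :
    ∫⁻ y, ∫⁻ g, ENNReal.ofReal (h g * p g y) ∂μ ∂ν = ∫⁻ g, ENNReal.ofReal (h g) ∂μ := by
  have hp_int : ∀ g, Integrable (p g) ν := fun g => by
    by_contra hc
    simpa [integral_undef hc] using hp_norm g
  have hp_lint : ∀ g, ∫⁻ y, ENNReal.ofReal (p g y) ∂ν = 1 := fun g => by
    rw [← ofReal_integral_eq_lintegral_ofReal (hp_int g) (ae_of_all _ (hp_nonneg g)), hp_norm g,
      ENNReal.ofReal_one]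
  have hmeas : Measurable (Function.uncurry fun y g => ENNReal.ofReal (h g * p g y)) :=
    ENNReal.measurable_ofReal.comp
      ((hh.comp measurable_snd).mul (hp_meas.comp measurable_swap))
  rw [lintegral_lintegral_swap hmeas.aemeasurable]
  refine lintegral_congr fun g => ?_
  simp_rw [ENNReal.ofReal_mul (hh_nonneg g)]
  rw [lintegral_const_mul _ hp_meas.of_uncurry_left.ennreal_ofReal, hp_lint g, mul_one]

end Kernel

lemma ofReal_sq_sub_div_le_lintegral {μ : Measure ℝ} {w : ℝ → ℝ} (hw : ∀ g, 0 ≤ w g)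
    (hw_int : Integrable w μ) :
    ENNReal.ofReal ((∫ g, g ^ 2 * w g ∂μ - ∫ g, w g ∂μ) ^ 2 / ∫ g, w g ∂μ) ≤
      ∫⁻ g, ENNReal.ofReal ((g ^ 2 - 1) ^ 2 * w g) ∂μ := by
  have hf : AEStronglyMeasurable (fun g : ℝ => g ^ 2 - 1) μ := by fun_prop
  have hR_nonneg : 0 ≤ᵐ[μ] fun g => (g ^ 2 - 1) ^ 2 * w g :=
    ae_of_all _ fun g => mul_nonneg (sq_nonneg _) (hw g)
  by_cases hR : Integrable (fun g => (g ^ 2 - 1) ^ 2 * w g) μ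
  · have hfw := hw_int.mul_of_sq_mul hf hw hR
    have hdiff : ∫ g, g ^ 2 * w g ∂μ - ∫ g, w g ∂μ = ∫ g, (g ^ 2 - 1) * w g ∂μ := by
      rw [← integral_sub ((hfw.add hw_int).congr (ae_of_all _ fun g => by
        simp only [Pi.add_apply]; ring)) hw_int]
      exact integral_congr_ae (ae_of_all _ fun g => by ring)
    rw [← ofReal_integral_eq_lintegral_ofReal hR hR_nonneg, hdiff]
    refine ENNReal.ofReal_le_ofReal (div_le_of_le_mul₀ (integral_nonneg hw)
      (integral_nonneg fun g => mul_nonneg (sq_nonneg _) (hw g)) ?_)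
    rw [mul_comm]
    exact sq_integral_mul_le hf hw hw_int hR
  · have hR_meas : AEStronglyMeasurable (fun g => (g ^ 2 - 1) ^ 2 * w g) μ :=
      (hf.pow 2).mul hw_int.aestronglyMeasurable
    rw [← lintegral_ofReal_ne_top_iff_integrable hR_meas hR_nonneg, not_ne_iff] at hR
    exact hR ▸ le_top

lemma setIntegral_mul_le_add {α : Type*} [MeasurableSpace α] {μ : Measure α} {s : Set α}
    (hs : MeasurableSet s) {u v w : α → ℝ} (hw : ∀ x ∈ s, 0 < w x) {t : ℝ} (ht : 0 < t)
    (huv : IntegrableOn (fun x => u x * v x) s μ) (hu : IntegrableOn (fun x => u x ^ 2 / w x) s μ)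
    (hv : IntegrableOn (fun x => w x * v x ^ 2) s μ) :
    ∫ x in s, u x * v x ∂μ ≤
      t / 2 * ∫ x in s, u x ^ 2 / w x ∂μ + 1 / (2 * t) * ∫ x in s, w x * v x ^ 2 ∂μ := by
  rw [← integral_const_mul, ← integral_const_mul,
    ← integral_add (hu.const_mul _) (hv.const_mul _)]
  refine setIntegral_mono_on huv ((hu.const_mul _).add (hv.const_mul _)) hs fun x hx => ?_
  have hwx := hw x hx
  have key : t / 2 * (u x ^ 2 / w x) + 1 / (2 * t) * (w x * v x ^ 2) - u x * v x =
      (t * u x - w x * v x) ^ 2 / (2 * t * w x) := by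
    field_simp; ring
  have : 0 ≤ (t * u x - w x * v x) ^ 2 / (2 * t * w x) := by positivity
  linarith

lemma setIntegral_sq_sub_div_le_two (p : ℝ → ℝ → ℝ) (hp_meas : Measurable (Function.uncurry p))
    (hp_nonneg : ∀ g y, 0 ≤ p g y) (hp_norm : ∀ g, ∫ y, p g y = 1) (m₀ m₂ : ℝ → ℝ)
    (hm₀ : ∀ y, m₀ y = ∫ g, gaussianPDFReal 0 1 g * p g y)
    (hm₂ : ∀ y, m₂ y = ∫ g, g ^ 2 * gaussianPDFReal 0 1 g * p g y) {S : Set ℝ}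
    (hS : MeasurableSet S) (hS_pos : ∀ y ∈ S, 0 < m₀ y)
    (hK_int : IntegrableOn (fun y => (m₂ y - m₀ y) ^ 2 / m₀ y) S) :
    ∫ y in S, (m₂ y - m₀ y) ^ 2 / m₀ y ≤ 2 := by
  set φ := gaussianPDFReal 0 1
  have hpointwise : ∀ y ∈ S, ENNReal.ofReal ((m₂ y - m₀ y) ^ 2 / m₀ y) ≤
      ∫⁻ g, ENNReal.ofReal ((g ^ 2 - 1) ^ 2 * φ g * p g y) := fun y hy => by
    have hw_int : Integrable fun g => φ g * p g y := by
      by_contra hc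
      exact (hS_pos y hy).ne' (by rw [hm₀ y, integral_undef hc])
    have := ofReal_sq_sub_div_le_lintegral
      (fun g => mul_nonneg (gaussianPDFReal_nonneg 0 1 g) (hp_nonneg g y)) hw_int
    rw [hm₀ y, hm₂ y]
    simpa only [mul_assoc] using this
  have hR_int : Integrable fun g => (g ^ 2 - 1) ^ 2 * φ g := by
    have hI := integrable_pow_mul_gaussianPDFReal_zero_one
    exact (((hI 4).sub ((hI 2).const_mul 2)).add (hI 0)).congr
      (ae_of_all _ fun g => by simp only [Pi.add_apply, Pi.sub_apply, φ]; ring)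
  have hS_nonneg : 0 ≤ᵐ[volume.restrict S] fun y => (m₂ y - m₀ y) ^ 2 / m₀ y := by
    filter_upwards [ae_restrict_mem hS] with y hy
    exact div_nonneg (sq_nonneg _) (hS_pos y hy).le
  rw [← ENNReal.ofReal_le_ofReal_iff zero_le_two, ofReal_integral_eq_lintegral_ofReal hK_int
    hS_nonneg, ← integral_sq_sub_one_sq_mul_gaussianPDFReal_zero_one,
    ofReal_integral_eq_lintegral_ofReal hR_int
      (ae_of_all _ fun g => mul_nonneg (sq_nonneg _) (gaussianPDFReal_nonneg 0 1 g))]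
  calc ∫⁻ y in S, ENNReal.ofReal ((m₂ y - m₀ y) ^ 2 / m₀ y)
      ≤ ∫⁻ y in S, ∫⁻ g, ENNReal.ofReal ((g ^ 2 - 1) ^ 2 * φ g * p g y) :=
        setLIntegral_mono' hS hpointwise
    _ ≤ ∫⁻ y, ∫⁻ g, ENNReal.ofReal ((g ^ 2 - 1) ^ 2 * φ g * p g y) :=
        lintegral_mono' Measure.restrict_le_self le_rfl
    _ = ∫⁻ g, ENNReal.ofReal ((g ^ 2 - 1) ^ 2 * φ g) :=
        lintegral_lintegral_ofReal_mul_eq hp_meas hp_nonneg hp_norm (by fun_prop)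
          fun g => mul_nonneg (sq_nonneg _) (gaussianPDFReal_nonneg 0 1 g)

theorem spectral_threshold_lower_bound_general
    (p : ℝ → ℝ → ℝ)
    (hp_meas : Measurable (Function.uncurry p))
    (hp_nonneg : ∀ g y, 0 ≤ p g y)
    (hp_norm : ∀ g, ∫ y, p g y = 1)
    (m₀ m₂ : ℝ → ℝ)
    (hm₀ : ∀ y, m₀ y = ∫ g, Real.exp (-(g ^ 2) / 2) / Real.sqrt (2 * Real.pi) * p g y)
    (hm₂ : ∀ y, m₂ y =
      ∫ g, g ^ 2 * (Real.exp (-(g ^ 2) / 2) / Real.sqrt (2 * Real.pi)) * p g y)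
    (α δ : ℝ) (hα : 0 < α) (hδ : 0 < δ)
    (K : ℝ)
    (hK_int : IntegrableOn (fun y => (m₂ y - m₀ y) ^ 2 / m₀ y) {y : ℝ | 0 < m₀ y})
    (hK : K = ∫ y in {y : ℝ | 0 < m₀ y}, (m₂ y - m₀ y) ^ 2 / m₀ y)
    (Γ : ℝ → ℝ)
    (hΓ2_int : IntegrableOn (fun y => m₀ y * Γ y ^ 2) {y : ℝ | 0 < m₀ y})
    (hΓ2 : ∫ y in {y : ℝ | 0 < m₀ y}, m₀ y * Γ y ^ 2 = 1 / δ)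
    (hΓ1_int : IntegrableOn (fun y => (m₂ y - m₀ y) * Γ y) {y : ℝ | 0 < m₀ y})
    (hΓ1 : 1 / (α * δ) < ∫ y in {y : ℝ | 0 < m₀ y}, (m₂ y - m₀ y) * Γ y) :
    1 / (α ^ 2 * K) < δ ∧ 1 / (2 * α ^ 2) < δ := by
  simp_rw [← gaussianPDFReal_zero_one_apply] at hm₀ hm₂
  have hm₀_meas : Measurable m₀ := by
    rw [funext hm₀]
    have h_meas : Measurable fun q : ℝ × ℝ => gaussianPDFReal 0 1 q.1 * p q.1 q.2 :=
      ((measurable_gaussianPDFReal 0 1).comp measurable_fst).mul hp_meas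
    exact h_meas.stronglyMeasurable.integral_prod_left.measurable
  have hS : MeasurableSet {y : ℝ | 0 < m₀ y} := measurableSet_lt measurable_const hm₀_meas
  have hAMGM := setIntegral_mul_le_add hS (fun y hy => hy) hα hΓ1_int hK_int hΓ2_int
  rw [← hK, hΓ2] at hAMGM
  have hK2 : K ≤ 2 := hK ▸ setIntegral_sq_sub_div_le_two p hp_meas hp_nonneg hp_norm m₀ m₂
    hm₀ hm₂ hS (fun y hy => hy) hK_int
  have hδK : 1 < α ^ 2 * K * δ := by
    have h := lt_of_lt_of_le hΓ1 hAMGM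
    field_simp at h
    nlinarith
  have hα2K : 0 < α ^ 2 * K := by nlinarith
  have hmain : 1 / (α ^ 2 * K) < δ := by
    rw [div_lt_iff₀ hα2K]; linarith
  refine ⟨hmain, lt_of_le_of_lt (one_div_le_one_div_of_le hα2K ?_) hmain⟩
  nlinarith

/-- If a linear constraint `∫_S (m₂−m₀)·Γ > 1/(αδ)` is achievable under the
normalization `∫_S m₀·Γ² = 1/δ`, then `δ > 1/(α²K)` where
`K = ∫_S (m₂−m₀)²/m₀`; in particular `δ > 1/(2α²)`. -/
theorem spectral_threshold_lower_bound
    (p : ℝ → ℝ → ℝ)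
    (hp_meas : Measurable (Function.uncurry p))
    (hp_nonneg : ∀ g y, 0 ≤ p g y)
    (hp_norm : ∀ g, ∫ y, p g y = 1)
    (m₀ m₂ : ℝ → ℝ)
    (hm₀ : ∀ y, m₀ y = ∫ g, Real.exp (-(g ^ 2) / 2) / Real.sqrt (2 * Real.pi) * p g y)
    (hm₂ : ∀ y, m₂ y =
      ∫ g, g ^ 2 * (Real.exp (-(g ^ 2) / 2) / Real.sqrt (2 * Real.pi)) * p g y)
    (α δ : ℝ) (hα : 0 < α) (hα1 : α ≤ 1) (hδ : 0 < δ)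
    (K : ℝ)
    (hK_int : IntegrableOn (fun y => (m₂ y - m₀ y) ^ 2 / m₀ y) {y : ℝ | 0 < m₀ y})
    (hK : K = ∫ y in {y : ℝ | 0 < m₀ y}, (m₂ y - m₀ y) ^ 2 / m₀ y)
    (hKpos : 0 < K)
    (Γ : ℝ → ℝ) (hΓ_meas : Measurable Γ)
    (hΓ2_int : IntegrableOn (fun y => m₀ y * Γ y ^ 2) {y : ℝ | 0 < m₀ y})
    (hΓ2 : ∫ y in {y : ℝ | 0 < m₀ y}, m₀ y * Γ y ^ 2 = 1 / δ)
    (hΓ1_int : IntegrableOn (fun y => (m₂ y - m₀ y) * Γ y) {y : ℝ | 0 < m₀ y})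
    (hΓ1 : 1 / (α * δ) < ∫ y in {y : ℝ | 0 < m₀ y}, (m₂ y - m₀ y) * Γ y) :
    1 / (α ^ 2 * K) < δ ∧ 1 / (2 * α ^ 2) < δ :=
  spectral_threshold_lower_bound_general p hp_meas hp_nonneg hp_norm m₀ m₂ hm₀ hm₂ α δ hα hδ K
    hK_int hK Γ hΓ2_int hΓ2 hΓ1_int hΓ1
end

section
/- Let α ∈ (1/2, 1) and suppose K := ∫_S (m₂ − m₀)²/m₀ dy ∈ (0, ∞). Then f_α(β) := (β − (1−α))·∫_S (m₂ − m₀)²/(α·m₂ + β·m₀) dy is finite for every β ∈ (1−α, ∞), strictly increasing on (1−α, ∞), tends to 0 as β ↓ 1−α and to K as β → ∞. Consequently, for every δ > 1/(α²K) there exists a unique β* ∈ (1−α, ∞) with f_α(β*) = 1/(α²δ). -/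
open MeasureTheory Real Set Filter Topology

/-!
Write `h = (m₂ - m₀)²`, `u = α m₂ ≥ 0`, `v = m₀ > 0` on `S` and `c = 1 - α > 0`, so that
`f_α(β) = ∫_S h · (β - c) / (u + β v)`. Pointwise, `(β - c) / (u + β v)` is strictly increasing on
`(c, ∞)` (the numerator of its derivative is `u + c v > 0`) and tends to `1 / v`, while
`h / (u + β v) ≤ (h / v) / β`. Domination by `h / v` gives finiteness, continuity and, by dominated
convergence, the limit `K` at infinity; near `c` the function is squeezed between `0` and
`(β - c) K / β`. Monotonicity is strict because `K > 0` forbids `h = 0` a.e. The intermediate value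
theorem then yields `β*`, unique by strict monotonicity, since `1 / (α² δ) ∈ (0, K)`.
-/

theorem div_add_mul_le_div_div {h u v β β' : ℝ} (hh : 0 ≤ h) (hu : 0 ≤ u) (hv : 0 < v)
    (hβ' : 0 < β') (hβ'β : β' ≤ β) : h / (u + β * v) ≤ h / v / β' := by
  rw [div_div, mul_comm]
  exact div_le_div_of_nonneg_left hh (by positivity) (by nlinarith)

theorem sub_mul_div_add_mul_le_div {h u v c β : ℝ} (hh : 0 ≤ h) (hu : 0 ≤ u) (hv : 0 < v)
    (hc : 0 ≤ c) (hcβ : c < β) : (β - c) * (h / (u + β * v)) ≤ h / v := by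
  have hβ : 0 < β := hc.trans_lt hcβ
  rw [mul_div_assoc', div_le_div_iff₀ (by positivity) hv]
  nlinarith [mul_nonneg hh (add_nonneg hu (mul_nonneg hc hv.le))]

theorem strictMonoOn_sub_div_add_mul {u v c : ℝ} (hu : 0 ≤ u) (hv : 0 < v) (hc : 0 < c) :
    StrictMonoOn (fun β => (β - c) / (u + β * v)) (Ioi c) := by
  intro β₁ hβ₁ β₂ hβ₂ hlt
  have hβ₁ : 0 < β₁ := hc.trans hβ₁
  have hβ₂ : 0 < β₂ := hc.trans hβ₂
  rw [div_lt_div_iff₀ (by positivity) (by positivity)]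
  nlinarith [mul_nonneg (sub_pos.mpr hlt).le hu, mul_pos (mul_pos (sub_pos.mpr hlt) hc) hv]

theorem tendsto_sub_mul_div_add_mul_atTop (h c : ℝ) {u v : ℝ} (hu : 0 ≤ u) (hv : 0 < v) :
    Tendsto (fun β => (β - c) * (h / (u + β * v))) atTop (𝓝 (h / v)) := by
  have hcont : Tendsto (fun t => h * ((1 - c * t) / (u * t + v))) (𝓝 0) (𝓝 (h / v)) := by
    have : ContinuousAt (fun t => h * ((1 - c * t) / (u * t + v))) 0 := by
      fun_prop (disch := simp [hv.ne'])
    simpa [div_eq_mul_inv] using this.tendsto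
  refine (hcont.comp tendsto_inv_atTop_zero).congr' ?_
  filter_upwards [eventually_gt_atTop 0] with β hβ
  have : 0 < u + β * v := by positivity
  simp only [Function.comp_apply]
  field_simp

theorem StrictMonoOn.existsUnique_eq_of_tendsto {α δ : Type*} [ConditionallyCompleteLinearOrder α]
    [TopologicalSpace α] [OrderTopology α] [DenselyOrdered α] [NoMaxOrder α]
    [LinearOrder δ] [TopologicalSpace δ] [OrderTopology δ]
    {f : α → δ} {c : α} {a b t : δ} (hmono : StrictMonoOn f (Ioi c))
    (hcont : ContinuousOn f (Ioi c)) (hc : Tendsto f (𝓝[>] c) (𝓝 a))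
    (htop : Tendsto f atTop (𝓝 b)) (ht : t ∈ Ioo a b) :
    ∃! x, x ∈ Ioi c ∧ f x = t := by
  obtain ⟨x₁, hx₁t, hx₁c⟩ :=
    ((hc.eventually (gt_mem_nhds ht.1)).and self_mem_nhdsWithin).exists
  obtain ⟨x₂, hx₂t, hx₁₂⟩ :=
    ((htop.eventually (lt_mem_nhds ht.2)).and (eventually_gt_atTop x₁)).exists
  have hIcc : Icc x₁ x₂ ⊆ Ioi c := fun x hx => lt_of_lt_of_le hx₁c hx.1
  obtain ⟨x, hx, hfx⟩ :=
    intermediate_value_Icc hx₁₂.le (hcont.mono hIcc) ⟨hx₁t.le, hx₂t.le⟩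
  exact ⟨x, ⟨hIcc hx, hfx⟩, fun y ⟨hy, hfy⟩ => hmono.injOn hy (hIcc hx) (hfy.trans hfx.symm)⟩

section

variable {Ω : Type*} [MeasurableSpace Ω] {μ : Measure Ω} {h u v : Ω → ℝ} {c β : ℝ}

structure QuotientData (μ : Measure Ω) (h u v : Ω → ℝ) : Prop where
  aemeasurable_h : AEMeasurable h μ
  aemeasurable_u : AEMeasurable u μ
  aemeasurable_v : AEMeasurable v μ
  h_nonneg : ∀ᵐ x ∂μ, 0 ≤ h x
  u_nonneg : ∀ᵐ x ∂μ, 0 ≤ u x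
  v_pos : ∀ᵐ x ∂μ, 0 < v x
  integrable_div : Integrable (fun x => h x / v x) μ

noncomputable def scaledQuotientIntegral (μ : Measure Ω) (h u v : Ω → ℝ) (c β : ℝ) : ℝ :=
  (β - c) * ∫ x, h x / (u x + β * v x) ∂μ

theorem scaledQuotientIntegral_eq_integral :
    scaledQuotientIntegral μ h u v c β = ∫ x, (β - c) * (h x / (u x + β * v x)) ∂μ :=
  (integral_const_mul _ _).symm

namespace QuotientData

theorem aestronglyMeasurable_div_add_mul (H : QuotientData μ h u v) (β : ℝ) :
    AEStronglyMeasurable (fun x => h x / (u x + β * v x)) μ :=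
  (H.aemeasurable_h.div (H.aemeasurable_u.add (H.aemeasurable_v.const_mul β))).aestronglyMeasurable

theorem ae_norm_div_add_mul_le (H : QuotientData μ h u v) {β' : ℝ} (hβ' : 0 < β') (hβ'β : β' ≤ β) :
    ∀ᵐ x ∂μ, ‖h x / (u x + β * v x)‖ ≤ h x / v x / β' := by
  filter_upwards [H.h_nonneg, H.u_nonneg, H.v_pos] with x hh hu hv
  have : 0 < u x + β * v x := by nlinarith
  rw [norm_of_nonneg (by positivity)]
  exact div_add_mul_le_div_div hh hu hv hβ' hβ'β

theorem integrable_div_add_mul (H : QuotientData μ h u v) (hβ : 0 < β) :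
    Integrable (fun x => h x / (u x + β * v x)) μ :=
  (H.integrable_div.div_const β).mono' (H.aestronglyMeasurable_div_add_mul β)
    (H.ae_norm_div_add_mul_le hβ le_rfl)

theorem continuousOn_integral_div_add_mul (H : QuotientData μ h u v) :
    ContinuousOn (fun β => ∫ x, h x / (u x + β * v x) ∂μ) (Ioi 0) := by
  intro β₀ (hβ₀ : 0 < β₀)
  have hβ' : 0 < β₀ / 2 := half_pos hβ₀
  refine (continuousAt_of_dominated (bound := fun x => h x / v x / (β₀ / 2))
    (Eventually.of_forall H.aestronglyMeasurable_div_add_mul) ?_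
    (H.integrable_div.div_const _) ?_).continuousWithinAt
  · filter_upwards [eventually_gt_nhds (half_lt_self hβ₀)] with β hβ
    exact H.ae_norm_div_add_mul_le hβ' hβ.le
  · filter_upwards [H.u_nonneg, H.v_pos] with x hu hv
    have : 0 < u x + β₀ * v x := by positivity
    fun_prop (disch := exact this.ne')

theorem continuousOn_scaledQuotientIntegral (H : QuotientData μ h u v) (hc : 0 ≤ c) :
    ContinuousOn (scaledQuotientIntegral μ h u v c) (Ioi c) :=
  (continuousOn_id.sub continuousOn_const).mul
    (H.continuousOn_integral_div_add_mul.mono fun _ hβ => hc.trans_lt hβ)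

theorem scaledQuotientIntegral_nonneg (H : QuotientData μ h u v) (hc : 0 ≤ c) (hcβ : c ≤ β) :
    0 ≤ scaledQuotientIntegral μ h u v c β := by
  refine mul_nonneg (sub_nonneg.mpr hcβ) (integral_nonneg_of_ae ?_)
  filter_upwards [H.h_nonneg, H.u_nonneg, H.v_pos] with x hh hu hv
  have : 0 ≤ β := hc.trans hcβ
  positivity

theorem scaledQuotientIntegral_le (H : QuotientData μ h u v) (hc : 0 ≤ c) (hcβ : c < β) :
    scaledQuotientIntegral μ h u v c β ≤ (β - c) * ((∫ x, h x / v x ∂μ) / β) := by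
  have hβ : 0 < β := hc.trans_lt hcβ
  rw [scaledQuotientIntegral, ← integral_div]
  refine mul_le_mul_of_nonneg_left (integral_mono_ae (H.integrable_div_add_mul hβ)
    (H.integrable_div.div_const β) ?_) (sub_nonneg.mpr hcβ.le)
  filter_upwards [H.ae_norm_div_add_mul_le hβ le_rfl] with x hx
  exact (le_abs_self _).trans hx

theorem tendsto_scaledQuotientIntegral_nhdsGT (H : QuotientData μ h u v) (hc : 0 < c) :
    Tendsto (scaledQuotientIntegral μ h u v c) (𝓝[>] c) (𝓝 0) := by
  have hbound : Tendsto (fun β => (β - c) * ((∫ x, h x / v x ∂μ) / β)) (𝓝[>] c) (𝓝 0) := by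
    have : ContinuousAt (fun β => (β - c) * ((∫ x, h x / v x ∂μ) / β)) c := by
      fun_prop (disch := exact hc.ne')
    simpa using this.continuousWithinAt.tendsto
  refine tendsto_of_tendsto_of_tendsto_of_le_of_le' tendsto_const_nhds hbound ?_ ?_
  · exact eventually_nhdsWithin_of_forall fun β hβ =>
      H.scaledQuotientIntegral_nonneg hc.le (le_of_lt hβ)
  · exact eventually_nhdsWithin_of_forall fun β hβ => H.scaledQuotientIntegral_le hc.le hβ

theorem tendsto_scaledQuotientIntegral_atTop (H : QuotientData μ h u v) (hc : 0 ≤ c) :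
    Tendsto (scaledQuotientIntegral μ h u v c) atTop (𝓝 (∫ x, h x / v x ∂μ)) := by
  refine (tendsto_integral_filter_of_dominated_convergence _
    (Eventually.of_forall fun β => (H.aestronglyMeasurable_div_add_mul β).const_mul _) ?_
    H.integrable_div ?_).congr fun β => scaledQuotientIntegral_eq_integral.symm
  · filter_upwards [eventually_gt_atTop c] with β hβ
    filter_upwards [H.h_nonneg, H.u_nonneg, H.v_pos] with x hh hu hv
    have : 0 < u x + β * v x := by nlinarith
    rw [norm_of_nonneg (mul_nonneg (sub_nonneg.mpr hβ.le) (by positivity))]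
    exact sub_mul_div_add_mul_le_div hh hu hv hc hβ
  · filter_upwards [H.u_nonneg, H.v_pos] with x hu hv
    exact tendsto_sub_mul_div_add_mul_atTop _ _ hu hv

theorem strictMonoOn_scaledQuotientIntegral (H : QuotientData μ h u v) (hc : 0 < c)
    (hpos : 0 < ∫ x, h x / v x ∂μ) : StrictMonoOn (scaledQuotientIntegral μ h u v c) (Ioi c) := by
  intro β₁ hβ₁ β₂ hβ₂ hlt
  set g : ℝ → Ω → ℝ := fun β x => (β - c) * (h x / (u x + β * v x))
  have hg : ∀ β ∈ Ioi c, Integrable (g β) μ := fun β hβ =>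
    (H.integrable_div_add_mul (hc.trans hβ)).const_mul _
  have hgap : ∀ᵐ x ∂μ, 0 ≤ g β₂ x - g β₁ x ∧ (g β₂ x - g β₁ x = 0 → h x / v x = 0) := by
    filter_upwards [H.h_nonneg, H.u_nonneg, H.v_pos] with x hh hu hv
    have hr := sub_pos.mpr (strictMonoOn_sub_div_add_mul hu hv hc hβ₁ hβ₂ hlt)
    have hfac : g β₂ x - g β₁ x =
        h x * ((β₂ - c) / (u x + β₂ * v x) - (β₁ - c) / (u x + β₁ * v x)) := by
      simp only [g]; ring
    rw [hfac]
    refine ⟨mul_nonneg hh hr.le, fun h0 => ?_⟩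
    rw [(mul_eq_zero_iff_right hr.ne').mp h0, zero_div]
  have hnonneg : 0 ≤ᵐ[μ] fun x => g β₂ x - g β₁ x := hgap.mono fun x hx => hx.1
  rw [← sub_pos, scaledQuotientIntegral_eq_integral, scaledQuotientIntegral_eq_integral,
    ← integral_sub (hg β₂ hβ₂) (hg β₁ hβ₁)]
  refine (integral_nonneg_of_ae hnonneg).lt_of_ne fun hzero => hpos.ne' ?_
  have hae : (fun x => g β₂ x - g β₁ x) =ᵐ[μ] 0 :=
    (integral_eq_zero_iff_of_nonneg_ae hnonneg ((hg β₂ hβ₂).sub (hg β₁ hβ₁))).mp hzero.symm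
  rw [integral_eq_zero_of_ae]
  filter_upwards [hae, hgap] with x hx hx'
  exact hx'.2 hx

end QuotientData

end

theorem measurable_integral_mul_of_measurable_uncurry {X Y : Type*} [MeasurableSpace X]
    [MeasurableSpace Y] {ν : Measure X} [SFinite ν] {p : X → Y → ℝ}
    (hp : Measurable (Function.uncurry p)) {w : X → ℝ} (hw : Measurable w) :
    Measurable fun y => ∫ x, w x * p x y ∂ν :=
  (((hw.comp measurable_fst).mul hp).stronglyMeasurable.integral_prod_left
    (f := fun x y => w x * p x y)).measurable

theorem f_alpha_properties_general
    (p : ℝ → ℝ → ℝ)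
    (hp_meas : Measurable (Function.uncurry p))
    (hp_nonneg : ∀ g y, 0 ≤ p g y)
    (m₀ m₂ : ℝ → ℝ)
    (hm₀ : ∀ y, m₀ y = ∫ g, Real.exp (-(g ^ 2) / 2) / Real.sqrt (2 * Real.pi) * p g y)
    (hm₂ : ∀ y, m₂ y =
      ∫ g, g ^ 2 * (Real.exp (-(g ^ 2) / 2) / Real.sqrt (2 * Real.pi)) * p g y)
    (α : ℝ) (hα : 1 / 2 < α) (hα1 : α < 1)
    (K : ℝ)
    (hK_int : IntegrableOn (fun y => (m₂ y - m₀ y) ^ 2 / m₀ y) {y : ℝ | 0 < m₀ y})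
    (hK : K = ∫ y in {y : ℝ | 0 < m₀ y}, (m₂ y - m₀ y) ^ 2 / m₀ y)
    (hKpos : 0 < K)
    (f : ℝ → ℝ)
    (hf : ∀ β : ℝ, f β = (β - (1 - α)) *
      ∫ y in {y : ℝ | 0 < m₀ y}, (m₂ y - m₀ y) ^ 2 / (α * m₂ y + β * m₀ y)) :
    (∀ β ∈ Set.Ioi (1 - α), IntegrableOn
        (fun y => (m₂ y - m₀ y) ^ 2 / (α * m₂ y + β * m₀ y)) {y : ℝ | 0 < m₀ y}) ∧
    StrictMonoOn f (Set.Ioi (1 - α)) ∧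
    Tendsto f (nhdsWithin (1 - α) (Set.Ioi (1 - α))) (nhds 0) ∧
    Tendsto f atTop (nhds K) ∧
    (∀ δ : ℝ, 1 / (α ^ 2 * K) < δ →
      ∃! β : ℝ, β ∈ Set.Ioi (1 - α) ∧ f β = 1 / (α ^ 2 * δ)) := by
  have hm₀_meas : Measurable m₀ := by
    rw [funext hm₀]; exact measurable_integral_mul_of_measurable_uncurry hp_meas (by fun_prop)
  have hm₂_meas : Measurable m₂ := by
    rw [funext hm₂]; exact measurable_integral_mul_of_measurable_uncurry hp_meas (by fun_prop)
  have hm₂_nonneg : ∀ y, 0 ≤ m₂ y := fun y =>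
    hm₂ y ▸ integral_nonneg fun g => mul_nonneg (by positivity) (hp_nonneg g y)
  have H : QuotientData (volume.restrict {y | 0 < m₀ y}) (fun y => (m₂ y - m₀ y) ^ 2)
      (fun y => α * m₂ y) m₀ :=
    { aemeasurable_h := ((hm₂_meas.sub hm₀_meas).pow_const 2).aemeasurable
      aemeasurable_u := (hm₂_meas.const_mul α).aemeasurable
      aemeasurable_v := hm₀_meas.aemeasurable
      h_nonneg := ae_of_all _ fun y => sq_nonneg _
      u_nonneg := ae_of_all _ fun y => mul_nonneg (by linarith) (hm₂_nonneg y)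
      v_pos := ae_restrict_mem (measurableSet_lt measurable_const hm₀_meas)
      integrable_div := hK_int }
  obtain rfl : f = scaledQuotientIntegral _ _ _ _ (1 - α) := funext hf
  have hc : 0 < 1 - α := by linarith
  have hmono := H.strictMonoOn_scaledQuotientIntegral hc (hK ▸ hKpos)
  have hlim₀ := H.tendsto_scaledQuotientIntegral_nhdsGT hc
  have hlim : Tendsto _ atTop (𝓝 K) := hK ▸ H.tendsto_scaledQuotientIntegral_atTop hc.le
  refine ⟨fun β hβ => H.integrable_div_add_mul (hc.trans hβ), hmono, hlim₀, hlim, fun δ hδ => ?_⟩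
  have hδ₀ : 0 < δ := lt_trans (by positivity) hδ
  refine hmono.existsUnique_eq_of_tendsto (H.continuousOn_scaledQuotientIntegral hc.le) hlim₀ hlim
    ⟨by positivity, ?_⟩
  rw [div_lt_iff₀ (by positivity)] at hδ ⊢
  linarith [show K * (α ^ 2 * δ) = δ * (α ^ 2 * K) by ring]

/-- Properties of `f_α(β) = (β − (1−α))·∫_S (m₂−m₀)²/(α m₂ + β m₀)`: finiteness on
`(1−α, ∞)`, strict monotonicity, boundary limits `0` and `K`, and existence of a
unique fixed point `β*` with `f_α(β*) = 1/(α²δ)` for every `δ > 1/(α²K)`. -/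
theorem f_alpha_properties
    (p : ℝ → ℝ → ℝ)
    (hp_meas : Measurable (Function.uncurry p))
    (hp_nonneg : ∀ g y, 0 ≤ p g y)
    (hp_norm : ∀ g, ∫ y, p g y = 1)
    (m₀ m₂ : ℝ → ℝ)
    (hm₀ : ∀ y, m₀ y = ∫ g, Real.exp (-(g ^ 2) / 2) / Real.sqrt (2 * Real.pi) * p g y)
    (hm₂ : ∀ y, m₂ y =
      ∫ g, g ^ 2 * (Real.exp (-(g ^ 2) / 2) / Real.sqrt (2 * Real.pi)) * p g y)
    (α : ℝ) (hα : 1 / 2 < α) (hα1 : α < 1)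
    (K : ℝ)
    (hK_int : IntegrableOn (fun y => (m₂ y - m₀ y) ^ 2 / m₀ y) {y : ℝ | 0 < m₀ y})
    (hK : K = ∫ y in {y : ℝ | 0 < m₀ y}, (m₂ y - m₀ y) ^ 2 / m₀ y)
    (hKpos : 0 < K)
    (f : ℝ → ℝ)
    (hf : ∀ β : ℝ, f β = (β - (1 - α)) *
      ∫ y in {y : ℝ | 0 < m₀ y}, (m₂ y - m₀ y) ^ 2 / (α * m₂ y + β * m₀ y)) :
    (∀ β ∈ Set.Ioi (1 - α), IntegrableOn
        (fun y => (m₂ y - m₀ y) ^ 2 / (α * m₂ y + β * m₀ y)) {y : ℝ | 0 < m₀ y}) ∧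
    StrictMonoOn f (Set.Ioi (1 - α)) ∧
    Tendsto f (nhdsWithin (1 - α) (Set.Ioi (1 - α))) (nhds 0) ∧
    Tendsto f atTop (nhds K) ∧
    (∀ δ : ℝ, 1 / (α ^ 2 * K) < δ →
      ∃! β : ℝ, β ∈ Set.Ioi (1 - α) ∧ f β = 1 / (α ^ 2 * δ)) :=
  f_alpha_properties_general p hp_meas hp_nonneg m₀ m₂ hm₀ hm₂ α hα hα1 K hK_int hK hKpos f hf
end

section
/- Let α ∈ (1/2, 1), δ > 0 and suppose K₁ := ∫_S m₁(y)²/m₀(y) dy ∈ (0, ∞). For every measurable L : ℝ → ℝ with ∫_S m₀·L² dy ∈ (0, ∞) and ∫_S |m₁·L| dy < ∞, one has α·(∫_S m₁·L dy) / √((α² + (1−α)²)·(∫_S m₁·L dy)² + (1/δ)·∫_S m₀·L² dy) ≤ ((α² + (1−α)²)/α² + 1/(α²·δ·K₁))^{−1/2}, and (1−α)·(∫_S m₁·L dy) / √((α² + (1−α)²)·(∫_S m₁·L dy)² + (1/δ)·∫_S m₀·L² dy) ≤ ((α² + (1−α)²)/(1−α)² + 1/((1−α)²·δ·K₁))^{−1/2};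 both bounds are attained simultaneously by the choice L(y) = m₁(y)/m₀(y) on S. -/
open MeasureTheory Real Set

/-! The bound is Cauchy–Schwarz in `L²(m₀ dy)` on `S`: `(∫_S m₁ L)² ≤ K₁ ∫_S m₀ L²`, with equality
for `L = m₁ / m₀`. Both overlaps are increasing functions of the ratio `(∫_S m₁ L)² / ∫_S m₀ L²`,
so they are maximised exactly when this ratio reaches `K₁`. -/

section CauchySchwarz

variable {X : Type*} [MeasurableSpace X] {μ : Measure X} {S : Set X} {w a L : X → ℝ}

theorem sq_setIntegral_mul_le (hS : MeasurableSet S) (hw : ∀ y ∈ S, 0 < w y)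
    (ha : IntegrableOn (fun y => a y ^ 2 / w y) S μ)
    (haL : IntegrableOn (fun y => a y * L y) S μ)
    (hL : IntegrableOn (fun y => w y * L y ^ 2) S μ) :
    (∫ y in S, a y * L y ∂μ) ^ 2 ≤
      (∫ y in S, a y ^ 2 / w y ∂μ) * ∫ y in S, w y * L y ^ 2 ∂μ := by
  set K := ∫ y in S, a y ^ 2 / w y ∂μ
  set A := ∫ y in S, a y * L y ∂μ
  set B := ∫ y in S, w y * L y ^ 2 ∂μ
  have hquad : ∀ t : ℝ, 0 ≤ K * (t * t) + (-2 * A) * t + B := by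
    intro t
    have hpt : ∀ y ∈ S, 0 ≤ t ^ 2 * (a y ^ 2 / w y) - 2 * t * (a y * L y) + w y * L y ^ 2 := by
      intro y hy
      have hwy := hw y hy
      have : t ^ 2 * (a y ^ 2 / w y) - 2 * t * (a y * L y) + w y * L y ^ 2 =
          w y * (t * a y / w y - L y) ^ 2 := by
        field_simp
        ring
      rw [this]
      positivity
    have hint := setIntegral_nonneg (μ := μ) hS hpt
    have hsub : IntegrableOn (fun y => t ^ 2 * (a y ^ 2 / w y) - 2 * t * (a y * L y)) S μ :=
      (ha.const_mul _).sub (haL.const_mul _)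
    rwa [integral_add hsub hL,
      integral_sub (ha.const_mul _) (haL.const_mul _), integral_const_mul, integral_const_mul,
      show t ^ 2 * K - 2 * t * A + B = K * (t * t) + (-2 * A) * t + B by ring] at hint
  have := discrim_le_zero hquad
  rw [discrim] at this
  linarith

end CauchySchwarz

section Overlap

variable {c δ K β : ℝ}

theorem inv_sqrt_div_sq_add_eq (hβ : 0 < β) :
    (√(c / β ^ 2 + 1 / (β ^ 2 * δ * K)))⁻¹ = β / √(c + 1 / (δ * K)) := by
  have : c / β ^ 2 + 1 / (β ^ 2 * δ * K) = (c + 1 / (δ * K)) / β ^ 2 := by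
    field_simp
  rw [this, sqrt_div' _ (by positivity), sqrt_sq hβ.le, inv_div]

theorem mul_div_sqrt_sq_add_eq (hδ : 0 < δ) (hK : 0 < K) :
    β * K / √(c * K ^ 2 + K / δ) = β / √(c + 1 / (δ * K)) := by
  have : c * K ^ 2 + K / δ = (c + 1 / (δ * K)) * K ^ 2 := by
    field_simp
  rw [this, sqrt_mul' _ (by positivity), sqrt_sq hK.le, mul_div_mul_right _ _ hK.ne']

theorem mul_div_sqrt_sq_add_le {A B : ℝ} (hc : 0 ≤ c) (hδ : 0 < δ) (hK : 0 < K) (hβ : 0 ≤ β)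
    (hAB : A ^ 2 ≤ K * B) :
    β * A / √(c * A ^ 2 + (1 / δ) * B) ≤ β / √(c + 1 / (δ * K)) := by
  rcases le_or_gt A 0 with hA | hA
  · calc β * A / √(c * A ^ 2 + (1 / δ) * B) ≤ 0 :=
          div_nonpos_of_nonpos_of_nonneg (mul_nonpos_of_nonneg_of_nonpos hβ hA) (sqrt_nonneg _)
      _ ≤ β / √(c + 1 / (δ * K)) := by positivity
  · -- `A² ≤ K B` turns the `B / δ` term into at least `A² / (δ K)`
    have hB : A ^ 2 / (δ * K) ≤ (1 / δ) * B := by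
      rw [div_le_iff₀ (by positivity)]
      calc A ^ 2 ≤ K * B := hAB
        _ = (1 / δ) * B * (δ * K) := by field_simp
    calc β * A / √(c * A ^ 2 + (1 / δ) * B) ≤ β * A / √(c * A ^ 2 + A ^ 2 / (δ * K)) := by
          gcongr
      _ = β / √(c + 1 / (δ * K)) := by
          have : c * A ^ 2 + A ^ 2 / (δ * K) = (c + 1 / (δ * K)) * A ^ 2 := by
            field_simp
          rw [this, sqrt_mul' _ (by positivity), sqrt_sq hA.le, mul_div_mul_right _ _ hA.ne']

end Overlap

theorem optimal_linear_estimator_general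
    (p : ℝ → ℝ → ℝ)
    (hp_meas : Measurable (Function.uncurry p))
    (m₀ m₁ : ℝ → ℝ)
    (hm₀ : ∀ y, m₀ y = ∫ g, Real.exp (-(g ^ 2) / 2) / Real.sqrt (2 * Real.pi) * p g y)
    (α δ : ℝ) (hα : 1 / 2 < α) (hα1 : α < 1) (hδ : 0 < δ)
    (K₁ : ℝ)
    (hK₁_int : IntegrableOn (fun y => (m₁ y) ^ 2 / m₀ y) {y : ℝ | 0 < m₀ y})
    (hK₁ : K₁ = ∫ y in {y : ℝ | 0 < m₀ y}, (m₁ y) ^ 2 / m₀ y)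
    (hK₁pos : 0 < K₁) :
    (∀ L : ℝ → ℝ, Measurable L →
      IntegrableOn (fun y => m₀ y * L y ^ 2) {y : ℝ | 0 < m₀ y} →
      0 < ∫ y in {y : ℝ | 0 < m₀ y}, m₀ y * L y ^ 2 →
      IntegrableOn (fun y => m₁ y * L y) {y : ℝ | 0 < m₀ y} →
      (α * (∫ y in {y : ℝ | 0 < m₀ y}, m₁ y * L y) /
          Real.sqrt ((α ^ 2 + (1 - α) ^ 2) *
              (∫ y in {y : ℝ | 0 < m₀ y}, m₁ y * L y) ^ 2 +
            (1 / δ) * ∫ y in {y : ℝ | 0 < m₀ y}, m₀ y * L y ^ 2) ≤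
        (Real.sqrt ((α ^ 2 + (1 - α) ^ 2) / α ^ 2 + 1 / (α ^ 2 * δ * K₁)))⁻¹) ∧
      ((1 - α) * (∫ y in {y : ℝ | 0 < m₀ y}, m₁ y * L y) /
          Real.sqrt ((α ^ 2 + (1 - α) ^ 2) *
              (∫ y in {y : ℝ | 0 < m₀ y}, m₁ y * L y) ^ 2 +
            (1 / δ) * ∫ y in {y : ℝ | 0 < m₀ y}, m₀ y * L y ^ 2) ≤
        (Real.sqrt ((α ^ 2 + (1 - α) ^ 2) / (1 - α) ^ 2 +
            1 / ((1 - α) ^ 2 * δ * K₁)))⁻¹)) ∧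
    (α * K₁ / Real.sqrt ((α ^ 2 + (1 - α) ^ 2) * K₁ ^ 2 + K₁ / δ) =
        (Real.sqrt ((α ^ 2 + (1 - α) ^ 2) / α ^ 2 + 1 / (α ^ 2 * δ * K₁)))⁻¹) ∧
    ((1 - α) * K₁ / Real.sqrt ((α ^ 2 + (1 - α) ^ 2) * K₁ ^ 2 + K₁ / δ) =
        (Real.sqrt ((α ^ 2 + (1 - α) ^ 2) / (1 - α) ^ 2 +
            1 / ((1 - α) ^ 2 * δ * K₁)))⁻¹) := by
  have hα₀ : 0 < α := by linarith
  have hα₁ : 0 < 1 - α := by linarith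
  have hm₀_meas : Measurable m₀ := by
    rw [funext hm₀]
    refine (StronglyMeasurable.integral_prod_left (Measurable.stronglyMeasurable ?_)).measurable
    exact ((measurable_fst.pow_const 2).neg.div_const 2).exp.div_const _ |>.mul hp_meas
  have hS : MeasurableSet {y : ℝ | 0 < m₀ y} := measurableSet_lt measurable_const hm₀_meas
  rw [inv_sqrt_div_sq_add_eq hα₀, inv_sqrt_div_sq_add_eq hα₁]
  refine ⟨fun L _ hL₀ _ hL₁ => ?_, mul_div_sqrt_sq_add_eq hδ hK₁pos,
    mul_div_sqrt_sq_add_eq hδ hK₁pos⟩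
  have hCS := sq_setIntegral_mul_le hS (fun _ hy => hy) hK₁_int hL₁ hL₀
  rw [← hK₁] at hCS
  exact ⟨mul_div_sqrt_sq_add_le (by positivity) hδ hK₁pos hα₀.le hCS,
    mul_div_sqrt_sq_add_le (by positivity) hδ hK₁pos hα₁.le hCS⟩

/-- Optimal overlaps for the linear estimator: for any preprocessing `L`, the two
overlap functionals are bounded by the explicit optimal values, and both bounds are
attained simultaneously by `L = m₁/m₀`. -/
theorem optimal_linear_estimator
    (p : ℝ → ℝ → ℝ)
    (hp_meas : Measurable (Function.uncurry p))
    (hp_nonneg : ∀ g y, 0 ≤ p g y)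
    (hp_norm : ∀ g, ∫ y, p g y = 1)
    (m₀ m₁ : ℝ → ℝ)
    (hm₀ : ∀ y, m₀ y = ∫ g, Real.exp (-(g ^ 2) / 2) / Real.sqrt (2 * Real.pi) * p g y)
    (hm₁ : ∀ y, m₁ y =
      ∫ g, g * (Real.exp (-(g ^ 2) / 2) / Real.sqrt (2 * Real.pi)) * p g y)
    (α δ : ℝ) (hα : 1 / 2 < α) (hα1 : α < 1) (hδ : 0 < δ)
    (K₁ : ℝ)
    (hK₁_int : IntegrableOn (fun y => (m₁ y) ^ 2 / m₀ y) {y : ℝ | 0 < m₀ y})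
    (hK₁ : K₁ = ∫ y in {y : ℝ | 0 < m₀ y}, (m₁ y) ^ 2 / m₀ y)
    (hK₁pos : 0 < K₁) :
    (∀ L : ℝ → ℝ, Measurable L →
      IntegrableOn (fun y => m₀ y * L y ^ 2) {y : ℝ | 0 < m₀ y} →
      0 < ∫ y in {y : ℝ | 0 < m₀ y}, m₀ y * L y ^ 2 →
      IntegrableOn (fun y => m₁ y * L y) {y : ℝ | 0 < m₀ y} →
      (α * (∫ y in {y : ℝ | 0 < m₀ y}, m₁ y * L y) /
          Real.sqrt ((α ^ 2 + (1 - α) ^ 2) *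
              (∫ y in {y : ℝ | 0 < m₀ y}, m₁ y * L y) ^ 2 +
            (1 / δ) * ∫ y in {y : ℝ | 0 < m₀ y}, m₀ y * L y ^ 2) ≤
        (Real.sqrt ((α ^ 2 + (1 - α) ^ 2) / α ^ 2 + 1 / (α ^ 2 * δ * K₁)))⁻¹) ∧
      ((1 - α) * (∫ y in {y : ℝ | 0 < m₀ y}, m₁ y * L y) /
          Real.sqrt ((α ^ 2 + (1 - α) ^ 2) *
              (∫ y in {y : ℝ | 0 < m₀ y}, m₁ y * L y) ^ 2 +
            (1 / δ) * ∫ y in {y : ℝ | 0 < m₀ y}, m₀ y * L y ^ 2) ≤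
        (Real.sqrt ((α ^ 2 + (1 - α) ^ 2) / (1 - α) ^ 2 +
            1 / ((1 - α) ^ 2 * δ * K₁)))⁻¹)) ∧
    (α * K₁ / Real.sqrt ((α ^ 2 + (1 - α) ^ 2) * K₁ ^ 2 + K₁ / δ) =
        (Real.sqrt ((α ^ 2 + (1 - α) ^ 2) / α ^ 2 + 1 / (α ^ 2 * δ * K₁)))⁻¹) ∧
    ((1 - α) * K₁ / Real.sqrt ((α ^ 2 + (1 - α) ^ 2) * K₁ ^ 2 + K₁ / δ) =
        (Real.sqrt ((α ^ 2 + (1 - α) ^ 2) / (1 - α) ^ 2 +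
            1 / ((1 - α) ^ 2 * δ * K₁)))⁻¹) :=
  optimal_linear_estimator_general p hp_meas m₀ m₁ hm₀ α δ hα hα1 hδ K₁ hK₁_int hK₁ hK₁pos
end

section
/- As t → ∞, the state-evolution sequence (χ_t, σ²_{V,t}) converges to the fixed point (χ̃, σ̃²), where β̃² := δ·a², χ̃ := √(β̃²·(β̃² − c)/(β̃² + b − c)) and σ̃² := β̃²·b/(β̃² + b − c); in particular, β_t² → β̃² = δ·a² = χ̃² + σ̃². -/
open MeasureTheory ProbabilityTheory Real Set Filter

/-!
Along the recursion the quantity `σ²_{U,t} + μ_t²` stays equal to `1/δ`. With this invariant,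
`β²_{t+1} = c + δ (δa² + b - c) μ_t²` and `μ²_{t+1} = δ a² μ_t² / β²_{t+1}`, so `1/μ_t²` obeys the
affine recursion `x ↦ (c / (δa²)) x + (δa² + b - c) / a²`. Its slope lies in `[0, 1)` because
`0 ≤ c < δa²`, hence `μ_t²` converges, and `χ_t`, `σ²_{V,t}`, `β_t²` are continuous functions of it.
-/

theorem tendsto_of_forall_succ_eq_mul_add {x : ℕ → ℝ} {r s : ℝ} (hr : |r| < 1)
    (hx : ∀ n, x (n + 1) = r * x n + s) : Tendsto x atTop (nhds (s / (1 - r))) := by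
  have hr1 : 1 - r ≠ 0 := by linarith [le_abs_self r]
  have hgeom : ∀ n, x n = s / (1 - r) + r ^ n * (x 0 - s / (1 - r)) := by
    intro n
    induction n with
    | zero => ring
    | succ n ih =>
      rw [hx, ih]
      field_simp
      ring
  have hlim := (tendsto_pow_atTop_nhds_zero_of_abs_lt_one hr).mul_const (x 0 - s / (1 - r))
    |>.const_add (s / (1 - r))
  rw [zero_mul, add_zero] at hlim
  exact hlim.congr fun n => (hgeom n).symm

theorem tendsto_of_succ_eq_comp {u v : ℕ → ℝ} {f : ℝ → ℝ} {L : ℝ}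
    (hf : ContinuousAt f L) (hv : Tendsto v atTop (nhds L))
    (huv : ∀ t ≥ 1, u (t + 1) = f (v t)) : Tendsto u atTop (nhds (f L)) :=
  (tendsto_add_atTop_iff_nat 1).mp <| (hf.tendsto.comp hv).congr'
    (eventually_atTop.mpr ⟨1, fun t ht => (huv t ht).symm⟩)

structure StateEvolution (δ a b c : ℝ) (χ σV β μ σU : ℕ → ℝ) : Prop where
  mu_one : μ 1 = 1 / √δ
  sigmaU_one : σU 1 = 0
  chi_succ : ∀ t ≥ 1, χ (t + 1) = δ * a * μ t
  sigmaV_succ : ∀ t ≥ 1, σV (t + 1) = δ * (b * μ t ^ 2 + c * σU t)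
  beta_succ : ∀ t ≥ 1, β (t + 1) = √(χ (t + 1) ^ 2 + σV (t + 1))
  mu_succ : ∀ t ≥ 1, μ (t + 1) = χ (t + 1) / (√δ * β (t + 1))
  sigmaU_succ : ∀ t ≥ 1, σU (t + 1) = σV (t + 1) / (δ * β (t + 1) ^ 2)

namespace StateEvolution

variable {δ a b c : ℝ} {χ σV β μ σU : ℕ → ℝ} {t : ℕ}

theorem sigmaV_succ_eq (h : StateEvolution δ a b c χ σV β μ σU) (hδ : δ ≠ 0) (ht : 1 ≤ t)
    (hU : σU t = 1 / δ - μ t ^ 2) : σV (t + 1) = c + δ * (b - c) * μ t ^ 2 := by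
  rw [h.sigmaV_succ t ht, hU]
  field_simp
  ring

theorem beta_succ_eq (h : StateEvolution δ a b c χ σV β μ σU) (hδ : δ ≠ 0) (ht : 1 ≤ t)
    (hU : σU t = 1 / δ - μ t ^ 2) :
    β (t + 1) = √(c + δ * (δ * a ^ 2 + b - c) * μ t ^ 2) := by
  rw [h.beta_succ t ht, h.chi_succ t ht, h.sigmaV_succ_eq hδ ht hU]
  ring_nf

theorem sq_beta_succ_eq (h : StateEvolution δ a b c χ σV β μ σU) (hδ : 0 < δ) (hc : 0 ≤ c)
    (hD : 0 ≤ δ * a ^ 2 + b - c) (ht : 1 ≤ t) (hU : σU t = 1 / δ - μ t ^ 2) :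
    β (t + 1) ^ 2 = c + δ * (δ * a ^ 2 + b - c) * μ t ^ 2 := by
  rw [h.beta_succ_eq hδ.ne' ht hU, sq_sqrt (by positivity)]

theorem sq_mu_succ_eq (h : StateEvolution δ a b c χ σV β μ σU) (hδ : 0 < δ) (hc : 0 ≤ c)
    (hD : 0 ≤ δ * a ^ 2 + b - c) (ht : 1 ≤ t) (hU : σU t = 1 / δ - μ t ^ 2) :
    μ (t + 1) ^ 2 = δ * a ^ 2 * μ t ^ 2 / (c + δ * (δ * a ^ 2 + b - c) * μ t ^ 2) := by
  rw [h.mu_succ t ht, div_pow, mul_pow, sq_sqrt hδ.le, h.sq_beta_succ_eq hδ hc hD ht hU,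
    h.chi_succ t ht]
  field_simp

theorem pos_and_sigmaU_eq (h : StateEvolution δ a b c χ σV β μ σU) (hδ : 0 < δ) (ha : 0 < a)
    (hc : 0 ≤ c) (hD : 0 < δ * a ^ 2 + b - c) (ht : 1 ≤ t) :
    0 < μ t ∧ σU t = 1 / δ - μ t ^ 2 := by
  induction t, ht using Nat.le_induction with
  | base => simp [h.mu_one, h.sigmaU_one, sq_sqrt hδ.le, hδ]
  | succ t ht ih =>
    obtain ⟨hμ, hU⟩ := ih
    have hβ2_pos : 0 < c + δ * (δ * a ^ 2 + b - c) * μ t ^ 2 := by positivity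
    refine ⟨?_, ?_⟩
    · rw [h.mu_succ t ht, h.chi_succ t ht, h.beta_succ_eq hδ.ne' ht hU]
      positivity
    · rw [h.sigmaU_succ t ht, h.sigmaV_succ_eq hδ.ne' ht hU, h.sq_beta_succ_eq hδ hc hD.le ht hU,
        h.sq_mu_succ_eq hδ hc hD.le ht hU]
      field_simp
      ring

theorem tendsto_sq_mu (h : StateEvolution δ a b c χ σV β μ σU) (hδ : 0 < δ) (ha : 0 < a)
    (hc : 0 ≤ c) (hcK : c < δ * a ^ 2) (hD : 0 < δ * a ^ 2 + b - c) :
    Tendsto (fun t => μ t ^ 2) atTop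
      (nhds ((δ * a ^ 2 - c) / (δ * (δ * a ^ 2 + b - c)))) := by
  have hslope : |c / (δ * a ^ 2)| < 1 := by
    rw [abs_of_nonneg (by positivity), div_lt_one (by positivity)]
    exact hcK
  have hrec : ∀ n, (μ (n + 2) ^ 2)⁻¹ =
      c / (δ * a ^ 2) * (μ (n + 1) ^ 2)⁻¹ + (δ * a ^ 2 + b - c) / a ^ 2 := by
    intro n
    obtain ⟨hμ, hU⟩ := h.pos_and_sigmaU_eq hδ ha hc hD (Nat.le_add_left 1 n)
    rw [h.sq_mu_succ_eq hδ hc hD.le (Nat.le_add_left 1 n) hU]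
    field_simp
  have hlim := (tendsto_of_forall_succ_eq_mul_add (x := fun n => (μ (n + 1) ^ 2)⁻¹) hslope hrec).inv₀ (by
    have : 1 - c / (δ * a ^ 2) ≠ 0 := by linarith [le_abs_self (c / (δ * a ^ 2))]
    positivity)
  have hval : ((δ * a ^ 2 + b - c) / a ^ 2 / (1 - c / (δ * a ^ 2)))⁻¹ =
      (δ * a ^ 2 - c) / (δ * (δ * a ^ 2 + b - c)) := by
    have : δ * a ^ 2 - c ≠ 0 := by linarith
    field_simp
  rw [hval] at hlim
  simp only [inv_inv] at hlim
  exact (tendsto_add_atTop_iff_nat 1).mp hlim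

end StateEvolution
theorem state_evolution_fixed_point_general
    {Ω : Type*} [MeasureSpace Ω]
    (δ : ℝ) (hδ : 0 < δ)
    (F : ℝ → ℝ)
    (G₁ : Ω → ℝ)
    (Y : Ω → ℝ)
    (a b c : ℝ)
    (hb : b = ∫ ω, (F (Y ω)) ^ 2 * (G₁ ω) ^ 2 ∂ℙ)
    (hc : c = ∫ ω, (F (Y ω)) ^ 2 ∂ℙ)
    (ha_pos : 0 < a) (hδa : c / a ^ 2 < δ)
    (χ σV β μ σU : ℕ → ℝ)
    (hμ1 : μ 1 = 1 / Real.sqrt δ) (hσU1 : σU 1 = 0)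
    (hχ : ∀ t ≥ 1, χ (t + 1) = δ * a * μ t)
    (hσV : ∀ t ≥ 1, σV (t + 1) = δ * (b * (μ t) ^ 2 + c * σU t))
    (hβ : ∀ t ≥ 1, β (t + 1) = Real.sqrt ((χ (t + 1)) ^ 2 + σV (t + 1)))
    (hμ : ∀ t ≥ 1, μ (t + 1) = χ (t + 1) / (Real.sqrt δ * β (t + 1)))
    (hσU : ∀ t ≥ 1, σU (t + 1) = σV (t + 1) / (δ * (β (t + 1)) ^ 2)) :
    Tendsto χ atTop (nhds (Real.sqrt
      ((δ * a ^ 2) * (δ * a ^ 2 - c) / (δ * a ^ 2 + b - c)))) ∧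
    Tendsto σV atTop (nhds ((δ * a ^ 2) * b / (δ * a ^ 2 + b - c))) ∧
    Tendsto (fun t => (β t) ^ 2) atTop (nhds (δ * a ^ 2)) ∧
    δ * a ^ 2 = (Real.sqrt ((δ * a ^ 2) * (δ * a ^ 2 - c) / (δ * a ^ 2 + b - c))) ^ 2
        + (δ * a ^ 2) * b / (δ * a ^ 2 + b - c) := by
  have hc0 : 0 ≤ c := hc ▸ integral_nonneg fun ω => by positivity
  have hb0 : 0 ≤ b := hb ▸ integral_nonneg fun ω => by positivity
  have hcK : c < δ * a ^ 2 := by linarith [(div_lt_iff₀ (by positivity)).mp hδa]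
  have hD : 0 < δ * a ^ 2 + b - c := by linarith
  have h : StateEvolution δ a b c χ σV β μ σU := ⟨hμ1, hσU1, hχ, hσV, hβ, hμ, hσU⟩
  have hm := h.tendsto_sq_mu hδ ha_pos hc0 hcK hD
  have hinv t (ht : 1 ≤ t) := h.pos_and_sigmaU_eq hδ ha_pos hc0 hD ht
  refine ⟨?_, ?_, ?_, ?_⟩
  · convert tendsto_of_succ_eq_comp (u := χ) (f := fun m => δ * a * √m)
      (by fun_prop) hm fun t ht => by rw [hχ t ht, sqrt_sq (hinv t ht).1.le] using 2
    rw [← sqrt_sq (by positivity : 0 ≤ δ * a), ← sqrt_mul (by positivity)]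
    congr 1
    field_simp
  · convert tendsto_of_succ_eq_comp (u := σV) (f := fun m => c + δ * (b - c) * m)
      (by fun_prop) hm fun t ht => h.sigmaV_succ_eq hδ.ne' ht (hinv t ht).2 using 2
    field_simp
    ring
  · convert tendsto_of_succ_eq_comp (u := fun t => β t ^ 2)
      (f := fun m => c + δ * (δ * a ^ 2 + b - c) * m) (by fun_prop) hm fun t ht => h.sq_beta_succ_eq hδ hc0 hD.le ht (hinv t ht).2 using 2
    field_simp
    ring
  · rw [sq_sqrt (by positivity)]
    field_simp
    ring

/-- Convergence of the state-evolution recursion to its fixed point: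
with `a = 𝔼[F(Ỹ)(G₁²−1)] > 0`, `b = 𝔼[F(Ỹ)²G₁²]`, `c = 𝔼[F(Ỹ)²]` and `δ > c/a²`,
the sequence `(χ_t, σ²_{V,t})` converges to `(χ̃, σ̃²)` with
`β̃² = δ a² = χ̃² + σ̃²`, `χ̃ = √(β̃²(β̃²−c)/(β̃²+b−c))`, `σ̃² = β̃² b/(β̃²+b−c)`. -/
theorem state_evolution_fixed_point
    {Ω : Type*} [MeasureSpace Ω] [IsProbabilityMeasure (ℙ : Measure Ω)]
    (α δ : ℝ) (hα : 1 / 2 < α) (hα1 : α < 1) (hδ : 0 < δ)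
    (Pε : Measure ℝ) [IsProbabilityMeasure Pε]
    (q : ℝ → ℝ → ℝ) (hq : Measurable (Function.uncurry q))
    (F : ℝ → ℝ) (hF_meas : Measurable F) (hF_bdd : ∃ M : ℝ, ∀ x, |F x| ≤ M)
    (G₁ G₂ η ε : Ω → ℝ)
    (hG₁m : Measurable G₁) (hG₂m : Measurable G₂)
    (hηm : Measurable η) (hεm : Measurable ε)
    (hG₁ : Measure.map G₁ ℙ = gaussianReal 0 1)
    (hG₂ : Measure.map G₂ ℙ = gaussianReal 0 1)
    (hη : Measure.map η ℙ =
      ENNReal.ofReal α • Measure.dirac (1 : ℝ) +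
        ENNReal.ofReal (1 - α) • Measure.dirac (0 : ℝ))
    (hε : Measure.map ε ℙ = Pε)
    (hindep : iIndepFun
      ![G₁, G₂, η, ε] ℙ)
    (Y : Ω → ℝ)
    (hY : ∀ ω, Y ω = q (η ω * G₁ ω + (1 - η ω) * G₂ ω) (ε ω))
    (a b c : ℝ)
    (ha : a = ∫ ω, F (Y ω) * ((G₁ ω) ^ 2 - 1) ∂ℙ)
    (hb : b = ∫ ω, (F (Y ω)) ^ 2 * (G₁ ω) ^ 2 ∂ℙ)
    (hc : c = ∫ ω, (F (Y ω)) ^ 2 ∂ℙ)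
    (ha_pos : 0 < a) (hδa : c / a ^ 2 < δ)
    (χ σV β μ σU : ℕ → ℝ)
    (hμ1 : μ 1 = 1 / Real.sqrt δ) (hσU1 : σU 1 = 0)
    (hχ : ∀ t ≥ 1, χ (t + 1) = δ * a * μ t)
    (hσV : ∀ t ≥ 1, σV (t + 1) = δ * (b * (μ t) ^ 2 + c * σU t))
    (hβ : ∀ t ≥ 1, β (t + 1) = Real.sqrt ((χ (t + 1)) ^ 2 + σV (t + 1)))
    (hμ : ∀ t ≥ 1, μ (t + 1) = χ (t + 1) / (Real.sqrt δ * β (t + 1)))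
    (hσU : ∀ t ≥ 1, σU (t + 1) = σV (t + 1) / (δ * (β (t + 1)) ^ 2)) :
    Tendsto χ atTop (nhds (Real.sqrt
      ((δ * a ^ 2) * (δ * a ^ 2 - c) / (δ * a ^ 2 + b - c)))) ∧
    Tendsto σV atTop (nhds ((δ * a ^ 2) * b / (δ * a ^ 2 + b - c))) ∧
    Tendsto (fun t => (β t) ^ 2) atTop (nhds (δ * a ^ 2)) ∧
    δ * a ^ 2 = (Real.sqrt ((δ * a ^ 2) * (δ * a ^ 2 - c) / (δ * a ^ 2 + b - c))) ^ 2
        + (δ * a ^ 2) * b / (δ * a ^ 2 + b - c) :=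
  state_evolution_fixed_point_general δ hδ F G₁ Y a b c hb hc ha_pos hδa χ σV β μ σU hμ1 hσU1 hχ hσV
    hβ hμ hσU
end

section
/- For every y ∈ ℝ: m₀(y) = (2π(1+σ²))^{−1/2}·exp(−y²/(2(1+σ²))), m₁(y) = m₀(y)·y/(1+σ²), and m₂(y) = m₀(y)·(y² + σ² + σ⁴)/(1+σ²)². Consequently, ∫_ℝ m₁(y)²/m₀(y) dy = 1/(1+σ²) and ∫_ℝ (m₂(y) − m₀(y))²/m₀(y) dy = 2/(1+σ²)². -/
/-!
Completing the square in `g` factors the joint density `γ(g) p(y|g)` as the `N(0, 1 + σ²)`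
density of `y` times the `N(y / (1 + σ²), σ² / (1 + σ²))` density of `g`, so `m₁ / m₀` and
`m₂ / m₀` are the posterior mean and second moment. The two integrals then reduce to the second
and fourth moments of `N(0, 1 + σ²)`; the fourth comes from the recursion obtained by
integrating by parts.
-/

open MeasureTheory Real Set

open ProbabilityTheory
open scoped NNReal

section GaussianMoments

variable {b : ℝ}

lemma integrable_pow_mul_exp_neg_mul_sq (hb : 0 < b) (n : ℕ) :
    Integrable fun x : ℝ => x ^ n * exp (-b * x ^ 2) := by
  simpa [rpow_natCast] using
    integrable_rpow_mul_exp_neg_mul_sq hb (s := n) (by linarith [n.cast_nonneg (α := ℝ)])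

lemma integral_pow_add_two_mul_exp_neg_mul_sq (hb : 0 < b) (n : ℕ) :
    ∫ x : ℝ, x ^ (n + 2) * exp (-b * x ^ 2)
      = (n + 1) / (2 * b) * ∫ x : ℝ, x ^ n * exp (-b * x ^ 2) := by
  have hderiv (x : ℝ) : HasDerivAt (fun x : ℝ => x ^ (n + 1) * exp (-b * x ^ 2))
      ((n + 1) * (x ^ n * exp (-b * x ^ 2)) - 2 * b * (x ^ (n + 2) * exp (-b * x ^ 2))) x := by
    have h := (hasDerivAt_pow (n + 1) x).mul ((hasDerivAt_pow 2 x).const_mul (-b)).exp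
    refine h.congr_deriv ?_
    simp only [Nat.add_sub_cancel, Nat.cast_add, Nat.cast_one, Nat.cast_ofNat]
    ring
  have hn := (integrable_pow_mul_exp_neg_mul_sq hb n).const_mul (n + 1 : ℝ)
  have hn2 := (integrable_pow_mul_exp_neg_mul_sq hb (n + 2)).const_mul (2 * b)
  have h0 := integral_eq_zero_of_hasDerivAt_of_integrable hderiv (hn.sub hn2)
    (integrable_pow_mul_exp_neg_mul_sq hb (n + 1))
  rw [integral_sub hn hn2, integral_const_mul, integral_const_mul] at h0
  rw [div_mul_eq_mul_div, eq_div_iff (by positivity)]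
  linear_combination -h0

lemma integral_sq_mul_exp_neg_mul_sq (hb : 0 < b) :
    ∫ x : ℝ, x ^ 2 * exp (-b * x ^ 2) = √(π / b) / (2 * b) := by
  have h := integral_pow_add_two_mul_exp_neg_mul_sq hb 0
  simp only [pow_zero, one_mul, zero_add, CharP.cast_eq_zero] at h
  rw [h, integral_gaussian]
  ring

lemma integral_pow_four_mul_exp_neg_mul_sq (hb : 0 < b) :
    ∫ x : ℝ, x ^ 4 * exp (-b * x ^ 2) = 3 * √(π / b) / (4 * b ^ 2) := by
  rw [integral_pow_add_two_mul_exp_neg_mul_sq hb 2, integral_sq_mul_exp_neg_mul_sq hb]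
  field_simp
  norm_num

lemma integral_sq_sub_sq_mul_exp_neg_mul_sq (hb : 0 < b) (c : ℝ) :
    ∫ x : ℝ, (x ^ 2 - c) ^ 2 * exp (-b * x ^ 2)
      = (3 / (4 * b ^ 2) - c / b + c ^ 2) * √(π / b) := by
  have hexpand : (fun x : ℝ => (x ^ 2 - c) ^ 2 * exp (-b * x ^ 2)) = fun x =>
      x ^ 4 * exp (-b * x ^ 2) - 2 * c * (x ^ 2 * exp (-b * x ^ 2)) + c ^ 2 * exp (-b * x ^ 2) := by
    ext x; ring
  have h4 := integrable_pow_mul_exp_neg_mul_sq hb 4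
  have h2 := (integrable_pow_mul_exp_neg_mul_sq hb 2).const_mul (2 * c)
  have h0 := (integrable_exp_neg_mul_sq hb).const_mul (c ^ 2)
  have h42 : Integrable fun x : ℝ =>
      x ^ 4 * exp (-b * x ^ 2) - 2 * c * (x ^ 2 * exp (-b * x ^ 2)) := h4.sub h2
  rw [hexpand, integral_add h42 h0, integral_sub h4 h2, integral_const_mul,
    integral_const_mul, integral_pow_four_mul_exp_neg_mul_sq hb,
    integral_sq_mul_exp_neg_mul_sq hb, integral_gaussian]
  field_simp

end GaussianMoments

section GaussianPDF

variable {μ : ℝ} {v : ℝ≥0}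

lemma gaussianPDFReal_eq_exp_div (μ : ℝ) (v : ℝ≥0) (x : ℝ) :
    gaussianPDFReal μ v x = exp (-(x - μ) ^ 2 / (2 * v)) / √(2 * π * v) := by
  rw [gaussianPDFReal, div_eq_inv_mul _ √_]

lemma integral_mul_gaussianPDFReal (hv : v ≠ 0) : ∫ x, x * gaussianPDFReal μ v x = μ := by
  simpa [integral_gaussianReal_eq_integral_smul hv, mul_comm] using
    integral_id_gaussianReal (μ := μ) (v := v)

lemma integral_sq_mul_gaussianPDFReal (hv : v ≠ 0) :
    ∫ x, x ^ 2 * gaussianPDFReal μ v x = μ ^ 2 + v := by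
  have h := variance_eq_sub (memLp_id_gaussianReal (μ := μ) (v := v) 2)
  simp only [variance_id_gaussianReal, integral_gaussianReal_eq_integral_smul hv, Pi.pow_apply,
    id, smul_eq_mul] at h
  simp_rw [mul_comm (gaussianPDFReal μ v _)] at h
  rw [integral_mul_gaussianPDFReal hv] at h
  linarith

lemma integral_sq_sub_sq_mul_gaussianPDFReal (hv : v ≠ 0) :
    ∫ x, (x ^ 2 - v) ^ 2 * gaussianPDFReal 0 v x = 2 * v ^ 2 := by
  have hv' : (0 : ℝ) < v := by positivity
  have hb : (0 : ℝ) < (2 * (v : ℝ))⁻¹ := by positivity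
  have hpdf (x : ℝ) : gaussianPDFReal 0 v x
      = (√(π / (2 * (v : ℝ))⁻¹))⁻¹ * exp (-(2 * (v : ℝ))⁻¹ * x ^ 2) := by
    rw [gaussianPDFReal, sub_zero, div_inv_eq_mul]
    congr 3 <;> ring
  simp_rw [hpdf, mul_left_comm _ (√(π / (2 * (v : ℝ))⁻¹))⁻¹]
  rw [integral_const_mul, integral_sq_sub_sq_mul_exp_neg_mul_sq hb]
  field_simp
  ring

end GaussianPDF

section GaussianConjugacy

variable {v : ℝ≥0}

lemma gaussianPDFReal_mul_gaussianPDFReal (hv : v ≠ 0) (g y : ℝ) :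
    gaussianPDFReal 0 1 g * gaussianPDFReal g v y
      = gaussianPDFReal 0 (1 + v) y * gaussianPDFReal (y / (1 + v)) (v / (1 + v)) g := by
  have hv' : (0 : ℝ) < v := by positivity
  have hexp : -(g - 0) ^ 2 / (2 * 1) + -(y - g) ^ 2 / (2 * v)
      = -(y - 0) ^ 2 / (2 * (1 + v)) + -(g - y / (1 + v)) ^ 2 / (2 * (v / (1 + v))) := by
    field_simp
    ring
  have hsqrt :
      √(2 * π * 1) * √(2 * π * v) = √(2 * π * (1 + v)) * √(2 * π * (v / (1 + v))) := by
    rw [← sqrt_mul (by positivity), ← sqrt_mul (by positivity)]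
    congr 1
    field_simp
  simp only [gaussianPDFReal, NNReal.coe_one, NNReal.coe_add, NNReal.coe_div]
  rw [mul_mul_mul_comm, mul_mul_mul_comm _ (rexp _), ← exp_add, ← exp_add, hexp, ← mul_inv,
    ← mul_inv, hsqrt]

lemma integral_gaussianPDFReal_mul_gaussianPDFReal (hv : v ≠ 0) (y : ℝ) :
    ∫ g, gaussianPDFReal 0 1 g * gaussianPDFReal g v y = gaussianPDFReal 0 (1 + v) y := by
  simp_rw [gaussianPDFReal_mul_gaussianPDFReal hv]
  rw [integral_const_mul, integral_gaussianPDFReal_eq_one _ (by positivity), mul_one]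

lemma integral_mul_gaussianPDFReal_mul_gaussianPDFReal (hv : v ≠ 0) (f : ℝ → ℝ) (y : ℝ) :
    ∫ g, f g * gaussianPDFReal 0 1 g * gaussianPDFReal g v y
      = gaussianPDFReal 0 (1 + v) y *
          ∫ g, f g * gaussianPDFReal (y / (1 + v)) (v / (1 + v)) g := by
  simp_rw [mul_assoc, gaussianPDFReal_mul_gaussianPDFReal hv, mul_left_comm (f _)]
  exact integral_const_mul _ _

lemma integral_id_mul_gaussianPDFReal_mul_gaussianPDFReal (hv : v ≠ 0) (y : ℝ) :
    ∫ g, g * gaussianPDFReal 0 1 g * gaussianPDFReal g v y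
      = gaussianPDFReal 0 (1 + v) y * y / (1 + v) := by
  rw [integral_mul_gaussianPDFReal_mul_gaussianPDFReal hv,
    integral_mul_gaussianPDFReal (by positivity), mul_div_assoc]

lemma integral_sq_mul_gaussianPDFReal_mul_gaussianPDFReal (hv : v ≠ 0) (y : ℝ) :
    ∫ g, g ^ 2 * gaussianPDFReal 0 1 g * gaussianPDFReal g v y
      = gaussianPDFReal 0 (1 + v) y * (y ^ 2 + v + v ^ 2) / (1 + v) ^ 2 := by
  have hv' : (0 : ℝ) < v := by positivity
  rw [integral_mul_gaussianPDFReal_mul_gaussianPDFReal hv,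
    integral_sq_mul_gaussianPDFReal (by positivity)]
  push_cast
  field_simp
  ring

lemma integral_sq_first_moment_div_gaussianPDFReal (hv : v ≠ 0) :
    ∫ y, (gaussianPDFReal 0 (1 + v) y * y / (1 + v)) ^ 2 / gaussianPDFReal 0 (1 + v) y
      = 1 / (1 + (v : ℝ)) := by
  have hpos (y : ℝ) : gaussianPDFReal 0 (1 + v) y ≠ 0 :=
    (gaussianPDFReal_pos _ _ _ (by positivity)).ne'
  calc _ = (∫ y, y ^ 2 * gaussianPDFReal 0 (1 + v) y) / (1 + v) ^ 2 := by
        rw [← integral_div]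
        congr 1 with y
        field_simp [hpos y]
    _ = 1 / (1 + v) := by
        rw [integral_sq_mul_gaussianPDFReal (by positivity)]
        push_cast
        field_simp
        ring

lemma integral_sq_second_moment_sub_div_gaussianPDFReal (hv : v ≠ 0) :
    ∫ y, (gaussianPDFReal 0 (1 + v) y * (y ^ 2 + v + v ^ 2) / (1 + v) ^ 2
        - gaussianPDFReal 0 (1 + v) y) ^ 2 / gaussianPDFReal 0 (1 + v) y
      = 2 / (1 + (v : ℝ)) ^ 2 := by
  have hpos (y : ℝ) : gaussianPDFReal 0 (1 + v) y ≠ 0 :=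
    (gaussianPDFReal_pos _ _ _ (by positivity)).ne'
  calc _ = (∫ y, (y ^ 2 - (1 + v : ℝ≥0)) ^ 2 * gaussianPDFReal 0 (1 + v) y)
        / (1 + v) ^ 4 := by
        rw [← integral_div]
        congr 1 with y
        push_cast
        field_simp [hpos y]
        ring
    _ = 2 / (1 + v) ^ 2 := by
        rw [integral_sq_sub_sq_mul_gaussianPDFReal (by positivity)]
        push_cast
        field_simp

end GaussianConjugacy

/-- Explicit Gaussian moments for the Gaussian-noise linear regression kernel, and the
resulting values `∫ m₁²/m₀ = 1/(1+σ²)` and `∫ (m₂−m₀)²/m₀ = 2/(1+σ²)²`. -/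
theorem mixed_linear_regression_moments
    (σ : ℝ) (hσ : 0 < σ)
    (p : ℝ → ℝ → ℝ)
    (hp : ∀ g y, p g y =
      Real.exp (-((y - g) ^ 2) / (2 * σ ^ 2)) / Real.sqrt (2 * Real.pi * σ ^ 2))
    (m₀ m₁ m₂ : ℝ → ℝ)
    (hm₀ : ∀ y, m₀ y = ∫ g, Real.exp (-(g ^ 2) / 2) / Real.sqrt (2 * Real.pi) * p g y)
    (hm₁ : ∀ y, m₁ y =
      ∫ g, g * (Real.exp (-(g ^ 2) / 2) / Real.sqrt (2 * Real.pi)) * p g y)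
    (hm₂ : ∀ y, m₂ y =
      ∫ g, g ^ 2 * (Real.exp (-(g ^ 2) / 2) / Real.sqrt (2 * Real.pi)) * p g y) :
    (∀ y, m₀ y =
      Real.exp (-(y ^ 2) / (2 * (1 + σ ^ 2))) / Real.sqrt (2 * Real.pi * (1 + σ ^ 2))) ∧
    (∀ y, m₁ y = m₀ y * y / (1 + σ ^ 2)) ∧
    (∀ y, m₂ y = m₀ y * (y ^ 2 + σ ^ 2 + σ ^ 4) / (1 + σ ^ 2) ^ 2) ∧
    (∫ y, (m₁ y) ^ 2 / m₀ y) = 1 / (1 + σ ^ 2) ∧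
    (∫ y, (m₂ y - m₀ y) ^ 2 / m₀ y) = 2 / (1 + σ ^ 2) ^ 2 := by
  obtain ⟨v, hv_def⟩ : ∃ v : ℝ≥0, (v : ℝ) = σ ^ 2 := ⟨⟨σ ^ 2, sq_nonneg σ⟩, rfl⟩
  have hv : v ≠ 0 := by rw [← NNReal.coe_ne_zero, hv_def]; positivity
  rw [show σ ^ 4 = (σ ^ 2) ^ 2 by ring, ← hv_def]
  have hprior (g : ℝ) : exp (-(g ^ 2) / 2) / √(2 * π) = gaussianPDFReal 0 1 g := by
    simp [gaussianPDFReal_eq_exp_div]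
  have hlik (g y : ℝ) : p g y = gaussianPDFReal g v y := by
    rw [hp, gaussianPDFReal_eq_exp_div, hv_def]
  have H0 (y : ℝ) : m₀ y = gaussianPDFReal 0 (1 + v) y := by
    simp_rw [hm₀, hprior, hlik]
    exact integral_gaussianPDFReal_mul_gaussianPDFReal hv y
  have H1 (y : ℝ) : m₁ y = m₀ y * y / (1 + v) := by
    simp_rw [hm₁, hprior, hlik, H0]
    exact integral_id_mul_gaussianPDFReal_mul_gaussianPDFReal hv y
  have H2 (y : ℝ) : m₂ y = m₀ y * (y ^ 2 + v + v ^ 2) / (1 + v) ^ 2 := by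
    simp_rw [hm₂, hprior, hlik, H0]
    exact integral_sq_mul_gaussianPDFReal_mul_gaussianPDFReal hv y
  refine ⟨fun y => ?_, H1, H2, ?_, ?_⟩
  · rw [H0, gaussianPDFReal_eq_exp_div, sub_zero, NNReal.coe_add, NNReal.coe_one]
  · simp_rw [H1, H0]
    exact integral_sq_first_moment_div_gaussianPDFReal hv
  · simp_rw [H2, H0]
    exact integral_sq_second_moment_sub_div_gaussianPDFReal hv
end
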